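/- arXiv:1105.3822 — 7 statements merged into one kernel-verified Lean document; each statement's English description precedes it below -/
import Mathlib

section
/- The closure operation cl(X) = {y ∈ A : d(X ∪ {y}) = d(X)} defined from the predimension makes (A, cl) a pregeometry (matroid): cl is a closure operator satisfying the exchange property, and its rank function agrees with d. -/
/-!
The predimension `δ` is submodular (the relations contained in `X ∪ Y` include those contained in
`X` or in `Y`, and those contained in `X ∩ Y` are those contained in both) and grows by at most
one when a point is added. Taking the minimum over supersets preserves both properties and
makes `d` monotone, so `d` satisfies the rank axioms of a matroid, with `d ∅ = 0` because
`δ ≥ 0`. The closure of any such function is a pregeometry: `y ∉ cl X` exactly when adding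
`y` raises `d` by one, submodularity makes `cl` monotone, and a minimal `B ⊆ X` with
`d B = d X` is a basis whose size is `d X`.
-/

open Finset

/-- Predimension of `X`: `|X| - |{r ∈ R : r ⊆ X}|`. -/
def delta {α : Type*} [DecidableEq α] (R : Finset (Finset α)) (X : Finset α) : ℤ :=
  (X.card : ℤ) - ((R.filter (fun r => r ⊆ X)).card : ℤ)

/-- Closure defined from the dimension function: `cl(X) = {y ∈ A : d(X ∪ {y}) = d(X)}`. -/
def clFn {α : Type*} [DecidableEq α] (A : Finset α) (d : Finset α → ℤ) (X : Finset α) :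
    Finset α :=
  A.filter (fun y => d (insert y X) = d X)

section Pregeometry

variable {α : Type*} [DecidableEq α]

section Predimension

variable (R : Finset (Finset α))

theorem delta_le_card (X : Finset α) : delta R X ≤ X.card := by
  unfold delta
  omega

theorem delta_insert_le (y : α) (X : Finset α) : delta R (insert y X) ≤ delta R X + 1 := by
  have hcard := card_insert_le y X
  have hfilter : #(R.filter (· ⊆ X)) ≤ #(R.filter (· ⊆ insert y X)) :=
    card_le_card (monotone_filter_right R fun _ _ hr => hr.trans (subset_insert y X))
  unfold delta
  omega

theorem delta_union_add_delta_inter_le (X Y : Finset α) :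
    delta R (X ∪ Y) + delta R (X ∩ Y) ≤ delta R X + delta R Y := by
  have hcard := card_union_add_card_inter X Y
  have hinter : R.filter (· ⊆ X) ∩ R.filter (· ⊆ Y) = R.filter (· ⊆ X ∩ Y) := by
    ext r
    simp only [mem_inter, mem_filter, subset_inter_iff]
    tauto
  have hunion : R.filter (· ⊆ X) ∪ R.filter (· ⊆ Y) ⊆ R.filter (· ⊆ X ∪ Y) :=
    union_subset (monotone_filter_right R fun _ _ hr => hr.trans subset_union_left)
      (monotone_filter_right R fun _ _ hr => hr.trans subset_union_right)
  have hfilter := card_union_add_card_inter (R.filter (· ⊆ X)) (R.filter (· ⊆ Y))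
  have hle := card_le_card hunion
  rw [hinter] at hfilter
  unfold delta
  omega

end Predimension

structure IsRankOn (A : Finset α) (d : Finset α → ℤ) : Prop where
  mono : ∀ ⦃X Y⦄, X ⊆ Y → Y ⊆ A → d X ≤ d Y
  union_add_inter_le : ∀ ⦃X Y⦄, X ⊆ A → Y ⊆ A → d (X ∪ Y) + d (X ∩ Y) ≤ d X + d Y
  insert_le : ∀ ⦃y X⦄, y ∈ A → X ⊆ A → d (insert y X) ≤ d X + 1

section MinimumOverSupersets

variable {A : Finset α} {R : Finset (Finset α)} {d : Finset α → ℤ}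

theorem IsRankOn.of_isLeast_delta
    (hd : ∀ X ⊆ A, IsLeast {z : ℤ | ∃ Y : Finset α, X ⊆ Y ∧ Y ⊆ A ∧ z = delta R Y} (d X)) :
    IsRankOn A d := by
  have le_delta : ∀ ⦃X Y⦄, X ⊆ Y → Y ⊆ A → d X ≤ delta R Y :=
    fun X Y hXY hYA => (hd X (hXY.trans hYA)).2 ⟨Y, hXY, hYA, rfl⟩
  refine ⟨fun X Y hXY hYA => ?_, fun X Y hXA hYA => ?_, fun y X hy hXA => ?_⟩
  · obtain ⟨Z, hYZ, hZA, hdY⟩ := (hd Y hYA).1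
    exact hdY ▸ le_delta (hXY.trans hYZ) hZA
  · obtain ⟨Z₁, hXZ₁, hZ₁A, hdX⟩ := (hd X hXA).1
    obtain ⟨Z₂, hYZ₂, hZ₂A, hdY⟩ := (hd Y hYA).1
    have hunion := le_delta (union_subset_union hXZ₁ hYZ₂) (union_subset hZ₁A hZ₂A)
    have hinter := le_delta (inter_subset_inter hXZ₁ hYZ₂) (inter_subset_left.trans hZ₁A)
    have hsub := delta_union_add_delta_inter_le R Z₁ Z₂
    omega
  · obtain ⟨Z, hXZ, hZA, hdX⟩ := (hd X hXA).1
    have hinsert := le_delta (insert_subset_insert y hXZ) (insert_subset hy hZA)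
    have hstep := delta_insert_le R y Z
    omega

theorem apply_empty_eq_zero_of_isLeast_delta (hpos : ∀ X ⊆ A, 0 ≤ delta R X)
    (hd : ∀ X ⊆ A, IsLeast {z : ℤ | ∃ Y : Finset α, X ⊆ Y ∧ Y ⊆ A ∧ z = delta R Y} (d X)) :
    d ∅ = 0 := by
  obtain ⟨Z, -, hZA, hdZ⟩ := (hd ∅ (empty_subset A)).1
  have hle := (hd ∅ (empty_subset A)).2 ⟨∅, Subset.rfl, empty_subset A, rfl⟩
  have hempty := delta_le_card R ∅
  have hnonneg := hpos Z hZA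
  simp only [card_empty, Nat.cast_zero] at hempty
  omega

end MinimumOverSupersets

theorem subset_clFn {A X : Finset α} {d : Finset α → ℤ} (hX : X ⊆ A) : X ⊆ clFn A d X :=
  fun y hy => mem_filter.2 ⟨hX hy, by rw [insert_eq_of_mem hy]⟩

theorem clFn_subset (A : Finset α) (d : Finset α → ℤ) (X : Finset α) : clFn A d X ⊆ A :=
  filter_subset _ _

namespace IsRankOn

variable {A X Y : Finset α} {d : Finset α → ℤ} {y z : α}

theorem insert_eq_of_subset (hd : IsRankOn A d) (hXY : X ⊆ Y) (hYA : Y ⊆ A) (hy : y ∈ A)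
    (hyX : d (insert y X) = d X) : d (insert y Y) = d Y := by
  have hsub := hd.union_add_inter_le hYA (insert_subset hy (hXY.trans hYA))
  rw [union_insert, union_eq_left.2 hXY] at hsub
  have hinter := hd.mono (subset_inter hXY (subset_insert y X)) (inter_subset_left.trans hYA)
  have hYle := hd.mono (subset_insert y Y) (insert_subset hy hYA)
  omega

theorem clFn_mono (hd : IsRankOn A d) (hXY : X ⊆ Y) (hYA : Y ⊆ A) :
    clFn A d X ⊆ clFn A d Y := by
  intro y hy
  rw [clFn, mem_filter] at hy ⊢
  exact ⟨hy.1, hd.insert_eq_of_subset hXY hYA hy.1 hy.2⟩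

theorem insert_eq_add_one_of_notMem_clFn (hd : IsRankOn A d) (hXA : X ⊆ A) (hy : y ∈ A)
    (hyX : y ∉ clFn A d X) : d (insert y X) = d X + 1 := by
  have hne : d (insert y X) ≠ d X := fun h => hyX (mem_filter.2 ⟨hy, h⟩)
  have hle := hd.mono (subset_insert y X) (insert_subset hy hXA)
  have hstep := hd.insert_le hy hXA
  omega

theorem union_eq_of_subset_clFn (hd : IsRankOn A d) (hXA : X ⊆ A) {T : Finset α}
    (hT : T ⊆ clFn A d X) : d (X ∪ T) = d X := by
  induction T using Finset.induction_on with
  | empty => rw [union_empty]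
  | insert a T _ ih =>
    obtain ⟨haA, haX⟩ := mem_filter.1 (hT (mem_insert_self a T))
    have hTcl := (subset_insert a T).trans hT
    rw [union_insert, hd.insert_eq_of_subset subset_union_left
      (union_subset hXA (hTcl.trans (clFn_subset A d X))) haA haX, ih hTcl]

theorem clFn_clFn (hd : IsRankOn A d) (hXA : X ⊆ A) : clFn A d (clFn A d X) = clFn A d X := by
  refine Subset.antisymm (fun y hy => ?_) (subset_clFn (clFn_subset A d X))
  obtain ⟨hyA, hycl⟩ := mem_filter.1 hy
  have hdcl : d (clFn A d X) = d X := by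
    simpa [union_eq_right.2 (subset_clFn hXA)] using hd.union_eq_of_subset_clFn hXA Subset.rfl
  have hle := hd.mono (insert_subset_insert y (subset_clFn (d := d) hXA))
    (insert_subset hyA (clFn_subset A d X))
  have hge := hd.mono (subset_insert y X) (insert_subset hyA hXA)
  exact mem_filter.2 ⟨hyA, by omega⟩

theorem mem_clFn_insert_of_mem_clFn_insert (hd : IsRankOn A d) (hXA : X ⊆ A) (hy : y ∈ A)
    (hz : z ∈ A) (hyzX : y ∈ clFn A d (insert z X)) (hyX : y ∉ clFn A d X) :
    z ∈ clFn A d (insert y X) := by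
  have hyX' := hd.insert_eq_add_one_of_notMem_clFn hXA hy hyX
  have hyzX' := (mem_filter.1 hyzX).2
  have hzX : z ∉ clFn A d X := by
    intro hzX
    have hle := hd.mono (insert_subset_insert y (subset_insert z X))
      (insert_subset hy (insert_subset hz hXA))
    rw [hyzX', (mem_filter.1 hzX).2] at hle
    omega
  have hzX' := hd.insert_eq_add_one_of_notMem_clFn hXA hz hzX
  exact mem_filter.2 ⟨hz, by rw [insert_comm, hyzX', hzX', hyX']⟩

theorem le_card (hd : IsRankOn A d) (h₀ : d ∅ = 0) (hXA : X ⊆ A) : d X ≤ #X := by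
  induction X using Finset.induction_on with
  | empty => simp [h₀]
  | insert a X haX ih =>
    have hX := (subset_insert a X).trans hXA
    have hstep := hd.insert_le (hXA (mem_insert_self a X)) hX
    rw [card_insert_of_notMem haX]
    push_cast
    linarith [ih hX]

theorem card_le_of_indep (hd : IsRankOn A d) (h₀ : d ∅ = 0) {B : Finset α} (hBA : B ⊆ A)
    (hB : ∀ b ∈ B, b ∉ clFn A d (B.erase b)) : #B ≤ d B := by
  induction B using Finset.induction_on with
  | empty => simp [h₀]
  | insert a B haB ih =>
    have hB' := (subset_insert a B).trans hBA
    have hBindep : ∀ b ∈ B, b ∉ clFn A d (B.erase b) := fun b hb hcl =>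
      hB b (mem_insert_of_mem hb) <|
        hd.clFn_mono (erase_subset_erase b (subset_insert a B))
          ((erase_subset b _).trans hBA) hcl
    have haB' : a ∉ clFn A d B := by
      simpa [erase_insert haB] using hB a (mem_insert_self a B)
    rw [hd.insert_eq_add_one_of_notMem_clFn hB' (hBA (mem_insert_self a B)) haB',
      card_insert_of_notMem haB]
    push_cast
    linarith [ih hB' hBindep]

theorem exists_basis (hd : IsRankOn A d) (h₀ : d ∅ = 0) (hXA : X ⊆ A) :
    ∃ B ⊆ X, (∀ b ∈ B, b ∉ clFn A d (B.erase b)) ∧ X ⊆ clFn A d B ∧ (#B : ℤ) = d X := by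
  obtain ⟨B, hB, hmin⟩ := exists_min_image (X.powerset.filter (fun B => d B = d X)) card
    ⟨X, mem_filter.2 ⟨mem_powerset_self X, rfl⟩⟩
  obtain ⟨hBX, hdB⟩ := mem_filter.1 hB
  rw [mem_powerset] at hBX
  have hBA := hBX.trans hXA
  have hindep : ∀ b ∈ B, b ∉ clFn A d (B.erase b) := by
    intro b hb hcl
    rw [clFn, mem_filter, insert_erase hb] at hcl
    have hsmaller := hmin (B.erase b)
      (mem_filter.2 ⟨mem_powerset.2 ((erase_subset b B).trans hBX), hcl.2.symm.trans hdB⟩)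
    exact (card_erase_lt_of_mem hb).not_ge hsmaller
  refine ⟨B, hBX, hindep, fun y hy => mem_filter.2 ⟨hXA hy, ?_⟩, ?_⟩
  · have hle := hd.mono (insert_subset hy hBX) hXA
    have hge := hd.mono (subset_insert y B) (insert_subset (hXA hy) hBA)
    omega
  · have := hd.le_card h₀ hBA
    have := hd.card_le_of_indep h₀ hBA hindep
    omega

end IsRankOn

end Pregeometry

theorem clFn_pregeometry_general {α : Type*} [DecidableEq α]
    (A : Finset α) (R : Finset (Finset α))
    (hpos : ∀ X ⊆ A, 0 ≤ delta R X)
    (d : Finset α → ℤ)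
    (hd : ∀ X ⊆ A, IsLeast {z : ℤ | ∃ Y : Finset α, X ⊆ Y ∧ Y ⊆ A ∧ z = delta R Y} (d X)) :
    (∀ X ⊆ A, X ⊆ clFn A d X) ∧
    (∀ X Y : Finset α, X ⊆ Y → Y ⊆ A → clFn A d X ⊆ clFn A d Y) ∧
    (∀ X ⊆ A, clFn A d (clFn A d X) = clFn A d X) ∧
    (∀ X ⊆ A, ∀ y ∈ A, ∀ z ∈ A,
      y ∈ clFn A d (insert z X) → y ∉ clFn A d X → z ∈ clFn A d (insert y X)) ∧
    (∀ X ⊆ A, ∃ B ⊆ X, (∀ b ∈ B, b ∉ clFn A d (B.erase b)) ∧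
      X ⊆ clFn A d B ∧ (B.card : ℤ) = d X) := by
  have hrank : IsRankOn A d := .of_isLeast_delta hd
  have h₀ : d ∅ = 0 := apply_empty_eq_zero_of_isLeast_delta hpos hd
  exact ⟨fun _ => subset_clFn, fun _ _ => hrank.clFn_mono, fun _ => hrank.clFn_clFn,
    fun _ hXA _ hy _ hz => hrank.mem_clFn_insert_of_mem_clFn_insert hXA hy hz,
    fun _ => hrank.exists_basis h₀⟩

/-- `(A, cl)` is a pregeometry: `cl` is a monotone, idempotent closure operator with
the exchange property, and the rank function of the resulting matroid is `d`. -/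
theorem clFn_pregeometry {α : Type*} [DecidableEq α]
    (A : Finset α) (R : Finset (Finset α))
    (hR : ∀ r ∈ R, r.Nonempty ∧ r ⊆ A)
    (hpos : ∀ X ⊆ A, 0 ≤ delta R X)
    (d : Finset α → ℤ)
    (hd : ∀ X ⊆ A, IsLeast {z : ℤ | ∃ Y : Finset α, X ⊆ Y ∧ Y ⊆ A ∧ z = delta R Y} (d X)) :
    (∀ X ⊆ A, X ⊆ clFn A d X) ∧
    (∀ X Y : Finset α, X ⊆ Y → Y ⊆ A → clFn A d X ⊆ clFn A d Y) ∧
    (∀ X ⊆ A, clFn A d (clFn A d X) = clFn A d X) ∧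
    (∀ X ⊆ A, ∀ y ∈ A, ∀ z ∈ A,
      y ∈ clFn A d (insert z X) → y ∉ clFn A d X → z ∈ clFn A d (insert y X)) ∧
    (∀ X ⊆ A, ∃ B ⊆ X, (∀ b ∈ B, b ∉ clFn A d (B.erase b)) ∧
      X ⊆ clFn A d B ∧ (B.card : ℤ) = d X) :=
  clFn_pregeometry_general A R hpos d hd
end

section
/- Let (A; R) be a finite set system with δ ≥ 0, let t : R → A be a transversal with image A \ Y, and suppose F ≤ A. Then Z = {f ∈ F \ Y : t⁻¹(f) ⊄ F} ∪ (F ∩ Y) is a basis of the restriction of the matroid PG(A; R) to F. -/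
/-!
Write `S = R|F` for the relations of `R` contained in `F`. Every relation of `S` has its
transversal point in `F \ Z`, and conversely every point of `F \ Z` is `t r` for some `r ∈ S`;
so `t` is a bijection `S → F \ Z`, whence `δ_S(F) = |Z|`. No relation of `S` lies in a set
avoiding `t(S)`, and for `W ⊇ Z` the relations of `S` inside `W` inject via `t` into `W \ Z`,
so `δ_S(W) ≥ |Z| = δ_S(Z)`. Hence both `Z` and `F` have rank `|Z|` in `PG(F; S)`.
-/

open Finset

section Transversal

variable {α : Type*}

def IsTransversal (S : Finset (Finset α)) (t : Finset α → α) : Prop :=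
  (∀ r ∈ S, t r ∈ r) ∧ Set.InjOn t S

namespace IsTransversal

variable {S S' : Finset (Finset α)} {t : Finset α → α} {Z W X F : Finset α}

theorem mono (ht : IsTransversal S t) (h : S' ⊆ S) : IsTransversal S' t :=
  ⟨fun r hr => ht.1 r (h hr), ht.2.mono (coe_subset.2 h)⟩

variable [DecidableEq α]

theorem delta_eq_card (ht : IsTransversal S t) (hZ : ∀ r ∈ S, t r ∉ Z) :
    delta S Z = Z.card := by
  have hnone : S.filter (· ⊆ Z) = ∅ :=
    filter_eq_empty_iff.2 fun r hr hrZ => hZ r hr (hrZ (ht.1 r hr))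
  simp [delta, hnone]

theorem card_le_delta (ht : IsTransversal S t) (hZ : ∀ r ∈ S, t r ∉ Z) (hZW : Z ⊆ W) :
    (Z.card : ℤ) ≤ delta S W := by
  have hinj : (S.filter (· ⊆ W)).card ≤ (W \ Z).card := by
    refine card_le_card_of_injOn t (fun r hr => ?_)
      (ht.2.mono (coe_subset.2 (filter_subset _ _)))
    obtain ⟨hrS, hrW⟩ := mem_filter.1 hr
    exact mem_sdiff.2 ⟨hrW (ht.1 r hrS), hZ r hrS⟩
  have hsplit := card_sdiff_add_card_eq_card hZW
  rw [delta]
  omega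

theorem delta_eq_card_of_image_eq_sdiff (ht : IsTransversal S t) (hS : ∀ r ∈ S, r ⊆ F)
    (hZF : Z ⊆ F) (himg : S.image t = F \ Z) : delta S F = Z.card := by
  have hcard : S.card = (F \ Z).card := by rw [← himg, card_image_of_injOn ht.2]
  have hsplit := card_sdiff_add_card_eq_card hZF
  rw [delta, filter_true_of_mem hS]
  omega

/-- Any set `X` with `Z ⊆ X` and `δ_S(X) = |Z|` has rank `|Z|` in `PG(F; S)`. -/
theorem isLeast_card (ht : IsTransversal S t) (hZ : ∀ r ∈ S, t r ∉ Z) (hZX : Z ⊆ X)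
    (hXF : X ⊆ F) (hX : delta S X = Z.card) :
    IsLeast {z : ℤ | ∃ W : Finset α, X ⊆ W ∧ W ⊆ F ∧ z = delta S W} Z.card :=
  ⟨⟨X, subset_rfl, hXF, hX.symm⟩, by
    rintro _ ⟨W, hXW, -, rfl⟩
    exact ht.card_le_delta hZ (hZX.trans hXW)⟩

end IsTransversal

variable [DecidableEq α]

/-- The set `Z = {f ∈ F \ Y : t⁻¹(f) ⊄ F} ∪ (F ∩ Y)`. -/
def transversalBasis (R : Finset (Finset α)) (t : Finset α → α) (Y F : Finset α) : Finset α :=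
  F.filter (fun f => (∃ r ∈ R, t r = f ∧ ¬ r ⊆ F) ∨ f ∈ Y)

theorem image_filter_subset_eq_sdiff_transversalBasis {A Y F : Finset α}
    {R : Finset (Finset α)} {t : Finset α → α} (ht : IsTransversal R t)
    (himg : R.image t = A \ Y) (hFA : F ⊆ A) :
    (R.filter (· ⊆ F)).image t = F \ transversalBasis R t Y F := by
  ext f
  simp only [transversalBasis, mem_image, mem_filter, mem_sdiff, not_and, not_or, not_exists]
  constructor
  · rintro ⟨r, ⟨hr, hrF⟩, rfl⟩
    have htr : t r ∈ A \ Y := himg ▸ mem_image_of_mem t hr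
    refine ⟨hrF (ht.1 r hr), fun _ => ⟨fun r' => ?_, (mem_sdiff.1 htr).2⟩⟩
    intro hr' heq hr'F
    exact hr'F (ht.2 hr' hr heq ▸ hrF)
  · rintro ⟨hf, hnot⟩
    obtain ⟨hnotR, hnotY⟩ := hnot hf
    obtain ⟨r, hr, rfl⟩ := mem_image.1 (himg ▸ mem_sdiff.2 ⟨hFA hf, hnotY⟩)
    exact ⟨r, ⟨hr, by_contra fun hrF => hnotR r hr rfl hrF⟩, rfl⟩

end Transversal

theorem basis_of_selfSufficient_general {α : Type*} [DecidableEq α]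
    (A : Finset α) (R : Finset (Finset α))
    (t : Finset α → α) (ht : (∀ r ∈ R, t r ∈ r) ∧ Set.InjOn t ↑R)
    (Y : Finset α) (himg : R.image t = A \ Y)
    (F : Finset α) (hFA : F ⊆ A)
    (dF : Finset α → ℤ)
    (hdF : ∀ X ⊆ F, IsLeast
      {z : ℤ | ∃ Z : Finset α, X ⊆ Z ∧ Z ⊆ F ∧
        z = delta (R.filter (fun r => r ⊆ F)) Z} (dF X)) :
    dF (F.filter (fun f => (∃ r ∈ R, t r = f ∧ ¬ r ⊆ F) ∨ f ∈ Y)) =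
      ((F.filter (fun f => (∃ r ∈ R, t r = f ∧ ¬ r ⊆ F) ∨ f ∈ Y)).card : ℤ) ∧
    dF (F.filter (fun f => (∃ r ∈ R, t r = f ∧ ¬ r ⊆ F) ∨ f ∈ Y)) = dF F := by
  change dF (transversalBasis R t Y F) = (transversalBasis R t Y F).card ∧
    dF (transversalBasis R t Y F) = dF F
  set Z := transversalBasis R t Y F
  have hZF : Z ⊆ F := filter_subset _ _
  have htS : IsTransversal (R.filter (· ⊆ F)) t := IsTransversal.mono ht (filter_subset _ _)
  have himgS := image_filter_subset_eq_sdiff_transversalBasis ht himg hFA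
  have hZ : ∀ r ∈ R.filter (· ⊆ F), t r ∉ Z := fun r hr =>
    (mem_sdiff.1 (himgS ▸ mem_image_of_mem t hr)).2
  have hrankZ : dF Z = Z.card :=
    (hdF Z hZF).unique (htS.isLeast_card hZ subset_rfl hZF (htS.delta_eq_card hZ))
  have hrankF : dF F = Z.card :=
    (hdF F subset_rfl).unique (htS.isLeast_card hZ hZF subset_rfl
      (htS.delta_eq_card_of_image_eq_sdiff (fun r hr => (mem_filter.1 hr).2) hZF himgS))
  exact ⟨hrankZ, hrankZ.trans hrankF.symm⟩

/-- If `t` is a transversal of `R` with image `A \ Y` and `F ≤ A`, then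
`Z = {f ∈ F \ Y : t⁻¹ f ⊄ F} ∪ (F ∩ Y)` is a basis of the restriction `PG(F; R|F)`. -/
theorem basis_of_selfSufficient {α : Type*} [DecidableEq α]
    (A : Finset α) (R : Finset (Finset α))
    (hR : ∀ r ∈ R, r.Nonempty ∧ r ⊆ A)
    (hpos : ∀ X ⊆ A, 0 ≤ delta R X)
    (t : Finset α → α) (ht : (∀ r ∈ R, t r ∈ r) ∧ Set.InjOn t ↑R)
    (Y : Finset α) (hY : Y ⊆ A) (himg : R.image t = A \ Y)
    (F : Finset α) (hFA : F ⊆ A)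
    (hF : ∀ F' : Finset α, F ⊆ F' → F' ⊆ A → delta R F ≤ delta R F')
    (dF : Finset α → ℤ)
    (hdF : ∀ X ⊆ F, IsLeast
      {z : ℤ | ∃ Z : Finset α, X ⊆ Z ∧ Z ⊆ F ∧
        z = delta (R.filter (fun r => r ⊆ F)) Z} (dF X)) :
    dF (F.filter (fun f => (∃ r ∈ R, t r = f ∧ ¬ r ⊆ F) ∨ f ∈ Y)) =
      ((F.filter (fun f => (∃ r ∈ R, t r = f ∧ ¬ r ⊆ F) ∨ f ∈ Y)).card : ℤ) ∧
    dF (F.filter (fun f => (∃ r ∈ R, t r = f ∧ ¬ r ⊆ F) ∨ f ∈ Y)) = dF F :=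
  basis_of_selfSufficient_general A R t ht Y himg F hFA dF hdF
end

section
/- Let (A, cl) be a matroid such that α(X) ≥ 0 for every union of flats X. Then there exists an α-transversal of the set of flats of A: a family (X_F : F a flat) of pairwise disjoint subsets with X_F ⊆ F and |X_F| = α(F). -/
open Finset

/-- `F` is a flat (closed set) of the matroid on `A` with rank function `d`. -/
def IsFlat {α : Type*} [DecidableEq α] (A : Finset α) (d : Finset α → ℤ) (F : Finset α) :
    Prop :=
  F ⊆ A ∧ ∀ y ∈ A, d (insert y F) = d F → y ∈ F

open scoped Classical in
/-- Mason's α-function: `α(X) = |X| - d(X) - Σ_{G a flat, G ⊊ X} α(G)`. -/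
noncomputable def alphaFn {α : Type*} (Flat : Finset α → Prop) (d : Finset α → ℤ)
    (X : Finset α) : ℤ :=
  (X.card : ℤ) - d X -
    ∑ G ∈ (X.powerset.filter (fun G => Flat G ∧ G ≠ X)).attach, alphaFn Flat d G.1
termination_by X.card
decreasing_by
  have h := G.2
  simp only [Finset.mem_filter, Finset.mem_powerset] at h
  exact Finset.card_lt_card (lt_of_le_of_ne h.1 h.2.2)

/-- `X` is a union of flats. -/
def UnionOfFlats {α : Type*} (Flat : Finset α → Prop) (X : Finset α) : Prop :=
  ∀ x ∈ X, ∃ F, Flat F ∧ F ⊆ X ∧ x ∈ F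

open Function

/-!
Index the demanded elements by pairs `(F, j)` with `F` a flat and `j < α(F)`, and let the pair
`(F, j)` choose from `F`. Hall's condition for this family is the Halmos–Vaughan condition
`Σ α(Fᵢ) ≤ |F₁ ∪ ⋯ ∪ Fᵣ|`. To check it, let `X` be the union: the `Fᵢ` are among `X` and its
proper subflats, all of which have `α ≥ 0`, and unfolding `α(X)` shows that the sum of `α` over
these sets is `|X| - d(X) ≤ |X|`.
-/

theorem exists_disjoint_subsets_card_eq_of_sum_le_card_biUnion {ι α : Type*} [DecidableEq α]
    (t : ι → Finset α) (n : ι → ℕ) (h : ∀ s : Finset ι, ∑ i ∈ s, n i ≤ #(s.biUnion t)) :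
    ∃ X : ι → Finset α, (∀ i, X i ⊆ t i ∧ #(X i) = n i) ∧ Pairwise (Disjoint on X) := by
  classical
  have hall : ∀ s : Finset (Σ i, Fin (n i)), #s ≤ #(s.biUnion fun p => t p.1) := by
    intro s
    calc #s ≤ #((s.image Sigma.fst).sigma fun i => (univ : Finset (Fin (n i)))) :=
          card_le_card fun p hp => mem_sigma.2 ⟨mem_image_of_mem _ hp, mem_univ _⟩
      _ = ∑ i ∈ s.image Sigma.fst, n i := by simp [card_sigma]
      _ ≤ #((s.image Sigma.fst).biUnion t) := h _
      _ = #(s.biUnion fun p => t p.1) := by rw [image_biUnion]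
  obtain ⟨f, hf_inj, hf_mem⟩ := (all_card_le_biUnion_card_iff_exists_injective _).1 hall
  refine ⟨fun i => univ.image fun j => f ⟨i, j⟩, fun i => ⟨?_, ?_⟩, ?_⟩
  · exact image_subset_iff.2 fun j _ => hf_mem ⟨i, j⟩
  · rw [card_image_of_injective _ fun j k hjk => sigma_mk_injective (hf_inj hjk), card_univ,
      Fintype.card_fin]
  · intro i i' hii'
    simp only [onFun, disjoint_left, mem_image, mem_univ, true_and]
    rintro _ ⟨j, rfl⟩ ⟨k, hk⟩
    exact hii' (congrArg Sigma.fst (hf_inj hk)).symm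

lemma alphaFn_add_sum_eq {α : Type*} (Flat : Finset α → Prop) (d : Finset α → ℤ)
    {X : Finset α} {P : Finset (Finset α)} (hP : ∀ G, G ∈ P ↔ G ⊆ X ∧ Flat G ∧ G ≠ X) :
    alphaFn Flat d X + ∑ G ∈ P, alphaFn Flat d G = #X - d X := by
  classical
  have hP' : P = X.powerset.filter fun G => Flat G ∧ G ≠ X := by
    ext G
    simp [hP]
  rw [alphaFn, sum_attach, hP']
  ring

section
variable {α : Type*} [DecidableEq α] {A : Finset α} {d : Finset α → ℤ}

lemma IsFlat.unionOfFlats {F : Finset α} (hF : IsFlat A d F) : UnionOfFlats (IsFlat A d) F :=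
  fun _ hx => ⟨F, hF, Subset.rfl, hx⟩

lemma sum_alphaFn_le_card_biUnion (hd : ∀ X ⊆ A, 0 ≤ d X)
    (halpha : ∀ X ⊆ A, UnionOfFlats (IsFlat A d) X → 0 ≤ alphaFn (IsFlat A d) d X)
    {S : Finset (Finset α)} (hS : ∀ F ∈ S, IsFlat A d F) :
    ∑ F ∈ S, alphaFn (IsFlat A d) d F ≤ #(S.biUnion id) := by
  classical
  set X := S.biUnion id
  have hXA : X ⊆ A := biUnion_subset.2 fun F hF => (hS F hF).1
  have hX : UnionOfFlats (IsFlat A d) X := fun x hx => by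
    obtain ⟨F, hF, hxF⟩ := mem_biUnion.1 hx
    exact ⟨F, hS F hF, subset_biUnion_of_mem id hF, hxF⟩
  set P := X.powerset.filter fun G => IsFlat A d G ∧ G ≠ X
  have hP : ∀ G, G ∈ P ↔ G ⊆ X ∧ IsFlat A d G ∧ G ≠ X := by simp [P]
  have hSP : S ⊆ insert X P := fun F hF => by
    rw [mem_insert, hP]
    by_cases hFX : F = X
    · exact .inl hFX
    · exact .inr ⟨subset_biUnion_of_mem id hF, hS F hF, hFX⟩
  have hnonneg : ∀ G ∈ insert X P, 0 ≤ alphaFn (IsFlat A d) d G := by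
    intro G hG
    rcases mem_insert.1 hG with hGX | hGP
    · exact hGX ▸ halpha X hXA hX
    · have hG := ((hP G).1 hGP).2.1
      exact halpha G hG.1 hG.unionOfFlats
  calc ∑ F ∈ S, alphaFn (IsFlat A d) d F
      ≤ ∑ G ∈ insert X P, alphaFn (IsFlat A d) d G :=
        sum_le_sum_of_subset_of_nonneg hSP fun G hG _ => hnonneg G hG
    _ = #X - d X := by
        rw [sum_insert fun hXP => ((hP X).1 hXP).2.2 rfl, alphaFn_add_sum_eq _ _ hP]
    _ ≤ #X := by linarith [hd X hXA]

end

theorem exists_alpha_transversal_general {α : Type*} [DecidableEq α]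
    (A : Finset α) (d : Finset α → ℤ)
    (hrank : ∀ X ⊆ A, 0 ≤ d X ∧ d X ≤ X.card)
    (halpha : ∀ X ⊆ A, UnionOfFlats (IsFlat A d) X → 0 ≤ alphaFn (IsFlat A d) d X) :
    ∃ Xf : Finset α → Finset α,
      (∀ F, IsFlat A d F → Xf F ⊆ F ∧ ((Xf F).card : ℤ) = alphaFn (IsFlat A d) d F) ∧
      (∀ F G, IsFlat A d F → IsFlat A d G → F ≠ G → Disjoint (Xf F) (Xf G)) := by
  classical
  have halpha_flat (F : {F // IsFlat A d F}) : 0 ≤ alphaFn (IsFlat A d) d F :=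
    halpha F F.2.1 F.2.unionOfFlats
  have hall : ∀ s : Finset {F // IsFlat A d F},
      ∑ F ∈ s, (alphaFn (IsFlat A d) d F).toNat ≤ #(s.biUnion Subtype.val) := by
    intro s
    have hsum := sum_alphaFn_le_card_biUnion (fun X hX => (hrank X hX).1) halpha
      (S := s.map (Embedding.subtype _)) fun F hF => by
        obtain ⟨F, -, rfl⟩ := mem_map.1 hF
        exact F.2
    rw [sum_map, map_eq_image, image_biUnion] at hsum
    zify
    simpa [Int.toNat_of_nonneg (halpha_flat _)] using hsum
  obtain ⟨X, hX, hX_disj⟩ := exists_disjoint_subsets_card_eq_of_sum_le_card_biUnion _ _ hall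
  refine ⟨fun F => if hF : IsFlat A d F then X ⟨F, hF⟩ else ∅, fun F hF => ?_,
    fun F G hF hG hFG => ?_⟩
  · simpa [dif_pos hF, (hX _).2, Int.toNat_of_nonneg (halpha_flat ⟨F, hF⟩)] using (hX _).1
  · simpa [dif_pos hF, dif_pos hG] using hX_disj fun h => hFG (congrArg Subtype.val h)

/-- If `α ≥ 0` on all unions of flats, then there is an α-transversal of the flats:
pairwise disjoint sets `Xf F ⊆ F` with `|Xf F| = α(F)`. -/
theorem exists_alpha_transversal {α : Type*} [DecidableEq α]
    (A : Finset α) (d : Finset α → ℤ)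
    (hrank : ∀ X ⊆ A, 0 ≤ d X ∧ d X ≤ X.card)
    (hmono : ∀ X Y : Finset α, X ⊆ Y → Y ⊆ A → d X ≤ d Y)
    (hsub : ∀ X Y : Finset α, X ⊆ A → Y ⊆ A → d (X ∪ Y) + d (X ∩ Y) ≤ d X + d Y)
    (halpha : ∀ X ⊆ A, UnionOfFlats (IsFlat A d) X → 0 ≤ alphaFn (IsFlat A d) d X) :
    ∃ Xf : Finset α → Finset α,
      (∀ F, IsFlat A d F → Xf F ⊆ F ∧ ((Xf F).card : ℤ) = alphaFn (IsFlat A d) d F) ∧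
      (∀ F G, IsFlat A d F → IsFlat A d G → F ≠ G → Disjoint (Xf F) (Xf G)) :=
  exists_alpha_transversal_general A d hrank halpha
end

section
/- Let (A, cl) be a finite matroid with rank function d, let X ⊆ A be a union of flats with d(X) ≥ 2, and let F(X) be the finite collection of all flats properly contained in X. Then α(X) = −Δ(F(X)), where Δ(F) = Σ_{S ⊆ I} (−1)^{|S|} d(F_S) with F_S = ∩_{i∈S} F_i for S ≠ ∅ and F_∅ = ∪_{i∈I} F_i. -/
open Finset

open scoped Classical in
/-- `F_S`: the intersection `∩_{F ∈ S} F` for nonempty `S`, and `∪ 𝓕` for `S = ∅`. -/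
noncomputable def FS {α : Type*} (A : Finset α) (𝓕 : Finset (Finset α))
    (S : Finset (Finset α)) : Finset α :=
  if S = ∅ then 𝓕.sup id else A.filter fun x => ∀ F ∈ S, x ∈ F

/-- Hrushovski's `Δ` of a family of flats: `Σ_{S ⊆ 𝓕} (-1)^{|S|} d(F_S)`. -/
noncomputable def DeltaFam {α : Type*} (A : Finset α) (d : Finset α → ℤ)
    (𝓕 : Finset (Finset α)) : ℤ :=
  ∑ S ∈ 𝓕.powerset, (-1 : ℤ) ^ S.card * d (FS A 𝓕 S)

/-! ### Auxiliary lemmas -/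

section Aux

variable {α : Type*} [DecidableEq α] {A : Finset α} {d : Finset α → ℤ}

/-- If adding `y` to `Y` does not raise the rank, neither does adding it to any `W ⊇ Y`. -/
lemma insert_rank_stable
    (hmono : ∀ X Y : Finset α, X ⊆ Y → Y ⊆ A → d X ≤ d Y)
    (hsub : ∀ X Y : Finset α, X ⊆ A → Y ⊆ A → d (X ∪ Y) + d (X ∩ Y) ≤ d X + d Y)
    {y : α} (hy : y ∈ A) {Y W : Finset α} (hYW : Y ⊆ W) (hWA : W ⊆ A)
    (h : d (insert y Y) = d Y) : d (insert y W) = d W := by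
  have hYA : Y ⊆ A := hYW.trans hWA
  have hs := hsub (insert y Y) W (Finset.insert_subset hy hYA) hWA
  have h1 : insert y Y ∪ W = insert y W := by
    rw [Finset.insert_union, Finset.union_eq_right.mpr hYW]
  have h2 : d Y ≤ d (insert y Y ∩ W) :=
    hmono _ _ (Finset.subset_inter (Finset.subset_insert y Y) hYW)
      (Finset.inter_subset_right.trans hWA)
  have h4 : d W ≤ d (insert y W) :=
    hmono _ _ (Finset.subset_insert _ _) (Finset.insert_subset hy hWA)
  rw [h1, h] at hs
  omega

/-- The closure of a set: all points of `A` not raising the rank. -/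
noncomputable def clOf (A : Finset α) (d : Finset α → ℤ) (Y : Finset α) : Finset α :=
  A.filter fun y => d (insert y Y) = d Y

lemma subset_clOf {Y : Finset α} (hYA : Y ⊆ A) : Y ⊆ clOf A d Y := by
  intro y hy
  exact Finset.mem_filter.mpr ⟨hYA hy, by rw [Finset.insert_eq_self.mpr hy]⟩

lemma clOf_rank
    (hmono : ∀ X Y : Finset α, X ⊆ Y → Y ⊆ A → d X ≤ d Y)
    (hsub : ∀ X Y : Finset α, X ⊆ A → Y ⊆ A → d (X ∪ Y) + d (X ∩ Y) ≤ d X + d Y)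
    {Y : Finset α} (hYA : Y ⊆ A) : d (clOf A d Y) = d Y := by
  suffices h : ∀ n (W : Finset α), W.card ≤ n → Y ⊆ W → W ⊆ clOf A d Y → d W = d Y from
    h (clOf A d Y).card _ le_rfl (subset_clOf hYA) Finset.Subset.rfl
  intro n
  induction n with
  | zero =>
    intro W hc hYW _
    have hW : W = ∅ := Finset.card_eq_zero.mp (Nat.le_zero.mp hc)
    have : Y = ∅ := Finset.subset_empty.mp (hW ▸ hYW)
    rw [hW, this]
  | succ n ih =>
    intro W hc hYW hW
    by_cases hWY : W ⊆ Y
    · rw [Finset.Subset.antisymm hWY hYW]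
    · obtain ⟨y, hyW, hyY⟩ := Finset.not_subset.mp hWY
      have hYW' : Y ⊆ W.erase y := Finset.subset_erase.mpr ⟨hYW, hyY⟩
      have hcard : (W.erase y).card ≤ n := by
        have := Finset.card_erase_of_mem hyW
        omega
      have h1 : d (W.erase y) = d Y :=
        ih _ hcard hYW' ((Finset.erase_subset _ _).trans hW)
      have hycl := Finset.mem_filter.mp (hW hyW)
      have h2 := insert_rank_stable hmono hsub hycl.1 hYW'
        ((Finset.erase_subset _ _).trans (hW.trans (Finset.filter_subset _ _))) hycl.2
      rw [Finset.insert_erase hyW] at h2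
      rw [h2, h1]

lemma clOf_flat
    (hmono : ∀ X Y : Finset α, X ⊆ Y → Y ⊆ A → d X ≤ d Y)
    (hsub : ∀ X Y : Finset α, X ⊆ A → Y ⊆ A → d (X ∪ Y) + d (X ∩ Y) ≤ d X + d Y)
    {Y : Finset α} (hYA : Y ⊆ A) : IsFlat A d (clOf A d Y) := by
  refine ⟨Finset.filter_subset _ _, fun y hy h => ?_⟩
  have hr : d (clOf A d Y) = d Y := clOf_rank hmono hsub hYA
  have hup : d (insert y Y) ≤ d Y := by
    calc d (insert y Y) ≤ d (insert y (clOf A d Y)) :=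
          hmono _ _ (Finset.insert_subset_insert _ (subset_clOf hYA))
            (Finset.insert_subset hy (Finset.filter_subset _ _))
      _ = d (clOf A d Y) := h
      _ = d Y := hr
  have hdown : d Y ≤ d (insert y Y) :=
    hmono _ _ (Finset.subset_insert _ _) (Finset.insert_subset hy hYA)
  exact Finset.mem_filter.mpr ⟨hy, le_antisymm hup hdown⟩

/-- Key lemma: if `I ⊆ F` with `F` a flat and adding `y ∈ A` to `I` does not raise the
rank, then `y ∈ F`. -/
lemma mem_flat_of_insert
    (hmono : ∀ X Y : Finset α, X ⊆ Y → Y ⊆ A → d X ≤ d Y)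
    (hsub : ∀ X Y : Finset α, X ⊆ A → Y ⊆ A → d (X ∪ Y) + d (X ∩ Y) ≤ d X + d Y)
    {F I : Finset α} (hF : IsFlat A d F) (hIF : I ⊆ F)
    {y : α} (hy : y ∈ A) (h : d (insert y I) = d I) : y ∈ F := by
  by_cases hyF : y ∈ F
  · exact hyF
  have hIA : I ⊆ A := hIF.trans hF.1
  have hs := hsub F (insert y I) hF.1 (Finset.insert_subset hy hIA)
  have h1 : F ∪ insert y I = insert y F := by
    rw [Finset.union_insert, Finset.union_eq_left.mpr hIF]
  have h2 : F ∩ insert y I = I := by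
    ext a
    simp only [Finset.mem_inter, Finset.mem_insert]
    constructor
    · rintro ⟨haF, rfl | haI⟩
      · exact absurd haF hyF
      · exact haI
    · intro haI; exact ⟨hIF haI, Or.inr haI⟩
  rw [h1, h2, h] at hs
  have h3 : d F ≤ d (insert y F) :=
    hmono _ _ (Finset.subset_insert _ _) (Finset.insert_subset hy hF.1)
  exact hF.2 y hy (by omega)

lemma isFlat_inter
    (hmono : ∀ X Y : Finset α, X ⊆ Y → Y ⊆ A → d X ≤ d Y)
    (hsub : ∀ X Y : Finset α, X ⊆ A → Y ⊆ A → d (X ∪ Y) + d (X ∩ Y) ≤ d X + d Y)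
    {F G : Finset α} (hF : IsFlat A d F) (hG : IsFlat A d G) : IsFlat A d (F ∩ G) := by
  refine ⟨Finset.inter_subset_left.trans hF.1, fun y hy h => ?_⟩
  exact Finset.mem_inter.mpr
    ⟨mem_flat_of_insert hmono hsub hF Finset.inter_subset_left hy h,
     mem_flat_of_insert hmono hsub hG Finset.inter_subset_right hy h⟩

open scoped Classical in
lemma isFlat_filter_inter
    (hmono : ∀ X Y : Finset α, X ⊆ Y → Y ⊆ A → d X ≤ d Y)
    (hsub : ∀ X Y : Finset α, X ⊆ A → Y ⊆ A → d (X ∪ Y) + d (X ∩ Y) ≤ d X + d Y)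
    {S : Finset (Finset α)} (hS : S.Nonempty) (hSf : ∀ F ∈ S, IsFlat A d F) :
    IsFlat A d (A.filter fun x => ∀ F ∈ S, x ∈ F) := by
  refine ⟨Finset.filter_subset _ _, fun y hy h => ?_⟩
  refine Finset.mem_filter.mpr ⟨hy, fun F hF => ?_⟩
  have hsubF : (A.filter fun x => ∀ F ∈ S, x ∈ F) ⊆ F := by
    intro a ha
    rw [Finset.mem_filter] at ha
    exact ha.2 F hF
  exact mem_flat_of_insert hmono hsub (hSf F hF) hsubF hy h

open scoped Classical in
/-- Unfolding of `alphaFn`: the sum of `α` over all flats contained in a flat `G` that is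
properly contained in `X` equals `|G| - d G`. -/
lemma beta_eq
    {X : Finset α} {G : Finset α} (hG : IsFlat A d G) (hGX : G ⊂ X) :
    ∑ H ∈ (A.powerset.filter fun F => IsFlat A d F ∧ F ⊂ X).filter (fun H => H ⊆ G),
      alphaFn (IsFlat A d) d H = (G.card : ℤ) - d G := by
  have hset : (A.powerset.filter fun F => IsFlat A d F ∧ F ⊂ X).filter (fun H => H ⊆ G)
      = insert G (G.powerset.filter fun H => IsFlat A d H ∧ H ≠ G) := by
    ext H
    simp only [Finset.mem_filter, Finset.mem_powerset, Finset.mem_insert]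
    constructor
    · rintro ⟨⟨hHA, hHf, hHX⟩, hHG⟩
      by_cases h : H = G
      · exact Or.inl h
      · exact Or.inr ⟨hHG, hHf, h⟩
    · rintro (rfl | ⟨hHG, hHf, hne⟩)
      · exact ⟨⟨hG.1, hG, hGX⟩, Finset.Subset.rfl⟩
      · exact ⟨⟨hHG.trans hG.1, hHf, lt_of_le_of_lt hHG hGX⟩, hHG⟩
  have hGnot : G ∉ (G.powerset.filter fun H => IsFlat A d H ∧ H ≠ G) := by
    simp
  rw [hset, Finset.sum_insert hGnot]
  have hunf : alphaFn (IsFlat A d) d G = (G.card : ℤ) - d G -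
      ∑ H ∈ (G.powerset.filter fun H => IsFlat A d H ∧ H ≠ G), alphaFn (IsFlat A d) d H := by
    rw [alphaFn]
    rw [Finset.sum_attach]
    congr!
  rw [hunf]
  ring

/-- The basic sign computation: summing `(-1)^{|S|}` times the indicator that all members
of `S` satisfy `p`, over nonempty `S ⊆ 𝓖`, gives `-c` times the indicator that some member
of `𝓖` satisfies `p`. -/
lemma sum_sign (𝓖 : Finset (Finset α)) (p : Finset α → Prop) [DecidablePred p] (c : ℤ) :
    ∑ S ∈ 𝓖.powerset.erase ∅, (-1 : ℤ) ^ S.card * (if ∀ F ∈ S, p F then c else 0)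
      = -(if ∃ F ∈ 𝓖, p F then c else 0) := by
  have key : ∑ S ∈ 𝓖.powerset, (-1 : ℤ) ^ S.card * (if ∀ F ∈ S, p F then c else 0)
      = (if 𝓖.filter p = ∅ then (1 : ℤ) else 0) * c := by
    have h1 : ∀ S ∈ 𝓖.powerset, (-1 : ℤ) ^ S.card * (if ∀ F ∈ S, p F then c else 0)
        = (if S ∈ (𝓖.filter p).powerset then (-1 : ℤ) ^ S.card else 0) * c := by
      intro S hS
      rw [Finset.mem_powerset] at hS
      have : (S ∈ (𝓖.filter p).powerset) ↔ ∀ F ∈ S, p F := by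
        rw [Finset.mem_powerset]
        constructor
        · intro h F hF
          exact (Finset.mem_filter.mp (h hF)).2
        · intro h F hF
          exact Finset.mem_filter.mpr ⟨hS hF, h F hF⟩
      by_cases h : ∀ F ∈ S, p F
      · rw [if_pos h, if_pos (this.mpr h)]
      · rw [if_neg h, if_neg (fun hh => h (this.mp hh)), zero_mul, mul_zero]
    rw [Finset.sum_congr rfl h1, ← Finset.sum_mul]
    congr 1
    rw [← Finset.sum_filter]
    have h2 : 𝓖.powerset.filter (fun S => S ∈ (𝓖.filter p).powerset)
        = (𝓖.filter p).powerset := by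
      ext S
      simp only [Finset.mem_filter, Finset.mem_powerset, and_iff_right_iff_imp]
      exact fun h => h.trans (Finset.filter_subset _ _)
    rw [h2, Finset.sum_powerset_neg_one_pow_card]
  have hmem : ∅ ∈ 𝓖.powerset := Finset.empty_mem_powerset _
  rw [Finset.sum_erase_eq_sub hmem, key]
  have h0 : (-1 : ℤ) ^ (∅ : Finset (Finset α)).card *
      (if ∀ F ∈ (∅ : Finset (Finset α)), p F then c else 0) = c := by simp
  rw [h0]
  have hiff : (∃ F ∈ 𝓖, p F) ↔ 𝓖.filter p ≠ ∅ := by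
    rw [← Finset.nonempty_iff_ne_empty, Finset.filter_nonempty_iff]
  by_cases h : 𝓖.filter p = ∅
  · rw [if_pos h, if_neg (fun hh => (hiff.mp hh) h)]
    ring
  · rw [if_neg h, if_pos (hiff.mpr h)]
    ring

end Aux

open scoped Classical in
/-- For a union of flats `X` with `d(X) ≥ 2`, `α(X) = -Δ(𝓕(X))`, where `𝓕(X)` is the
collection of flats properly contained in `X`. -/
theorem alpha_eq_neg_Delta {α : Type*} [DecidableEq α]
    (A : Finset α) (d : Finset α → ℤ)
    (hrank : ∀ X ⊆ A, 0 ≤ d X ∧ d X ≤ X.card)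
    (hmono : ∀ X Y : Finset α, X ⊆ Y → Y ⊆ A → d X ≤ d Y)
    (hsub : ∀ X Y : Finset α, X ⊆ A → Y ⊆ A → d (X ∪ Y) + d (X ∩ Y) ≤ d X + d Y)
    (X : Finset α) (hX : X ⊆ A) (hXu : UnionOfFlats (IsFlat A d) X) (hd2 : 2 ≤ d X) :
    alphaFn (IsFlat A d) d X =
      - DeltaFam A d (A.powerset.filter (fun F => IsFlat A d F ∧ F ⊂ X)) := by
  classical
  set 𝓕 := A.powerset.filter (fun F => IsFlat A d F ∧ F ⊂ X) with h𝓕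
  have hmem𝓕 : ∀ F, F ∈ 𝓕 ↔ IsFlat A d F ∧ F ⊂ X := by
    intro F
    simp only [h𝓕, Finset.mem_filter, Finset.mem_powerset]
    exact ⟨fun h => h.2, fun h => ⟨h.1.1, h⟩⟩
  -- every point of X lies in a proper flat
  have hcover : ∀ x ∈ X, ∃ G ∈ 𝓕, x ∈ G := by
    intro x hx
    obtain ⟨F, hF, hFX, hxF⟩ := hXu x hx
    have hxA : x ∈ A := hX hx
    have hxsub : ({x} : Finset α) ⊆ A := Finset.singleton_subset_iff.mpr hxA
    have hCflat : IsFlat A d (clOf A d {x}) := clOf_flat hmono hsub hxsub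
    set G := clOf A d {x} ∩ F with hGdef
    have hGflat : IsFlat A d G := isFlat_inter hmono hsub hCflat hF
    have hxG : x ∈ G := Finset.mem_inter.mpr
      ⟨subset_clOf hxsub (Finset.mem_singleton_self x), hxF⟩
    have hGsubX : G ⊆ X := Finset.inter_subset_right.trans hFX
    have hGrank : d G ≤ 1 := by
      have h1 : d G ≤ d (clOf A d {x}) :=
        hmono _ _ Finset.inter_subset_left (Finset.filter_subset _ _)
      have h2 : d (clOf A d {x}) = d {x} := clOf_rank hmono hsub hxsub
      have h3 : d {x} ≤ ({x} : Finset α).card := (hrank _ hxsub).2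
      simp only [Finset.card_singleton] at h3
      omega
    have hGne : G ≠ X := by
      intro h
      rw [h] at hGrank
      omega
    exact ⟨G, (hmem𝓕 G).mpr ⟨hGflat, Finset.ssubset_iff_subset_ne.mpr ⟨hGsubX, hGne⟩⟩, hxG⟩
  -- F_∅ is X
  have hemp : ∅ ∈ 𝓕.powerset := Finset.empty_mem_powerset _
  have hFSemp : FS A 𝓕 ∅ = X := by
    rw [FS, if_pos rfl]
    ext a
    simp only [Finset.mem_sup, id_eq]
    constructor
    · rintro ⟨F, hF, haF⟩
      exact ((hmem𝓕 F).mp hF).2.subset haF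
    · intro ha
      exact hcover a ha
  -- rewrite each nonempty term
  have hterm : ∀ S ∈ 𝓕.powerset.erase ∅,
      (-1 : ℤ) ^ S.card * d (FS A 𝓕 S)
        = (∑ x ∈ A, (-1 : ℤ) ^ S.card * (if ∀ F ∈ S, x ∈ F then 1 else 0))
          - ∑ H ∈ 𝓕, (-1 : ℤ) ^ S.card *
              (if ∀ F ∈ S, H ⊆ F then alphaFn (IsFlat A d) d H else 0) := by
    intro S hS
    rw [Finset.mem_erase, Finset.mem_powerset] at hS
    obtain ⟨hSne, hS𝓕⟩ := hS
    have hSnonempty : S.Nonempty := Finset.nonempty_iff_ne_empty.mpr hSne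
    have hSf : ∀ F ∈ S, IsFlat A d F := fun F hF => ((hmem𝓕 F).mp (hS𝓕 hF)).1
    set I := A.filter fun x => ∀ F ∈ S, x ∈ F with hIdef
    have hFSS : FS A 𝓕 S = I := by
      rw [FS, if_neg hSne, hIdef]
      congr!
    have hIflat : IsFlat A d I := isFlat_filter_inter hmono hsub hSnonempty hSf
    obtain ⟨F₀, hF₀S⟩ := hSnonempty
    have hIF₀ : I ⊆ F₀ := by
      intro a ha
      rw [hIdef, Finset.mem_filter] at ha
      exact ha.2 F₀ hF₀S
    have hIX : I ⊂ X := lt_of_le_of_lt hIF₀ ((hmem𝓕 F₀).mp (hS𝓕 hF₀S)).2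
    have hbeta := beta_eq (A := A) (d := d) (X := X) hIflat hIX
    rw [← h𝓕] at hbeta
    -- d I = |I| - ∑_{H ∈ 𝓕, H ⊆ I} α H
    have hdI : d I = (I.card : ℤ) - ∑ H ∈ 𝓕.filter (fun H => H ⊆ I),
        alphaFn (IsFlat A d) d H := by omega
    have hcard : (I.card : ℤ) = ∑ x ∈ A, (if ∀ F ∈ S, x ∈ F then (1 : ℤ) else 0) := by
      rw [← Finset.sum_filter, ← hIdef]
      simp
    have hsum2' : ∑ H ∈ 𝓕.filter (fun H => H ⊆ I), alphaFn (IsFlat A d) d H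
        = ∑ H ∈ 𝓕, (if ∀ F ∈ S, H ⊆ F then alphaFn (IsFlat A d) d H else 0) := by
      rw [Finset.sum_filter]
      refine Finset.sum_congr rfl fun H hH => ?_
      have hHA : H ⊆ A := ((hmem𝓕 H).mp hH).1.1
      have hiff : H ⊆ I ↔ ∀ F ∈ S, H ⊆ F := by
        rw [hIdef]
        constructor
        · intro h F hF a ha
          exact (Finset.mem_filter.mp (h ha)).2 F hF
        · intro h a ha
          exact Finset.mem_filter.mpr ⟨hHA ha, fun F hF => h F hF ha⟩
      by_cases h : H ⊆ I
      · rw [if_pos h, if_pos (hiff.mp h)]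
      · rw [if_neg h, if_neg (fun hh => h (hiff.mpr hh))]
    rw [hFSS, hdI, hcard, hsum2', mul_sub, Finset.mul_sum, Finset.mul_sum]
  -- the two double sums
  have hsum1 : ∑ x ∈ A, ∑ S ∈ 𝓕.powerset.erase ∅,
      (-1 : ℤ) ^ S.card * (if ∀ F ∈ S, x ∈ F then 1 else 0) = -(X.card : ℤ) := by
    have h1 : ∀ x ∈ A, (∑ S ∈ 𝓕.powerset.erase ∅,
        (-1 : ℤ) ^ S.card * (if ∀ F ∈ S, x ∈ F then 1 else 0))
          = -(if x ∈ X then (1 : ℤ) else 0) := by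
      intro x hxA
      rw [sum_sign 𝓕 (fun F => x ∈ F) 1]
      have hiff : (∃ F ∈ 𝓕, x ∈ F) ↔ x ∈ X := by
        constructor
        · rintro ⟨F, hF, hxF⟩
          exact ((hmem𝓕 F).mp hF).2.subset hxF
        · intro hx
          exact hcover x hx
      by_cases h : x ∈ X
      · rw [if_pos (hiff.mpr h), if_pos h]
      · rw [if_neg (fun hh => h (hiff.mp hh)), if_neg h]
    rw [Finset.sum_congr rfl h1, Finset.sum_neg_distrib, Finset.sum_ite_mem,
      Finset.inter_eq_right.mpr hX]
    simp
  have hsum2 : ∑ H ∈ 𝓕, ∑ S ∈ 𝓕.powerset.erase ∅,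
      (-1 : ℤ) ^ S.card * (if ∀ F ∈ S, H ⊆ F then alphaFn (IsFlat A d) d H else 0)
        = -∑ H ∈ 𝓕, alphaFn (IsFlat A d) d H := by
    have h1 : ∀ H ∈ 𝓕, (∑ S ∈ 𝓕.powerset.erase ∅,
        (-1 : ℤ) ^ S.card * (if ∀ F ∈ S, H ⊆ F then alphaFn (IsFlat A d) d H else 0))
          = -(alphaFn (IsFlat A d) d H) := by
      intro H hH
      rw [sum_sign 𝓕 (fun F => H ⊆ F) (alphaFn (IsFlat A d) d H),
        if_pos ⟨H, hH, Finset.Subset.rfl⟩]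
    rw [Finset.sum_congr rfl h1, Finset.sum_neg_distrib]
  -- unfold alphaFn at X
  have hXunf : alphaFn (IsFlat A d) d X = (X.card : ℤ) - d X -
      ∑ H ∈ 𝓕, alphaFn (IsFlat A d) d H := by
    rw [alphaFn, Finset.sum_attach]
    congr 1
    refine Finset.sum_congr ?_ fun _ _ => rfl
    ext H
    simp only [Finset.mem_filter, Finset.mem_powerset, hmem𝓕 H]
    constructor
    · rintro ⟨hHX, hHf, hne⟩
      exact ⟨hHf, Finset.ssubset_iff_subset_ne.mpr ⟨hHX, hne⟩⟩
    · rintro ⟨hHf, hHX⟩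
      exact ⟨hHX.subset, hHf, hHX.ne⟩
  -- assemble
  have hDelta : DeltaFam A d 𝓕
      = d X - (X.card : ℤ) + ∑ H ∈ 𝓕, alphaFn (IsFlat A d) d H := by
    rw [DeltaFam, ← Finset.add_sum_erase _ _ hemp, Finset.sum_congr rfl hterm,
      Finset.sum_sub_distrib, Finset.sum_comm,
      Finset.sum_comm (s := 𝓕.powerset.erase ∅) (t := 𝓕), hsum1, hsum2]
    simp only [Finset.card_empty, pow_zero, one_mul, hFSemp]
    ring
  rw [hXunf, hDelta]
  ring
end

section
/- Let (A; R) be a finite set system with δ ≥ 0 and C ≤ A self-sufficient. Then for any X ⊆ A: δ(X) − d(X) ≥ δ(X ∩ C) − d(X ∩ C), where d is the rank function of PG(A; R). -/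
open Finset

lemma delta_submod {α : Type*} [DecidableEq α] (R : Finset (Finset α)) (X Y : Finset α) :
    delta R (X ∪ Y) + delta R (X ∩ Y) ≤ delta R X + delta R Y := by
  unfold delta
  have hcard : (X ∪ Y).card + (X ∩ Y).card = X.card + Y.card :=
    Finset.card_union_add_card_inter X Y
  set S := R.filter (fun r => r ⊆ X) with hS
  set T := R.filter (fun r => r ⊆ Y) with hT
  have hint : S ∩ T = R.filter (fun r => r ⊆ X ∩ Y) := by
    ext r
    simp [hS, hT, Finset.subset_inter_iff, and_assoc, and_left_comm]
  have huni : S ∪ T ⊆ R.filter (fun r => r ⊆ X ∪ Y) := by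
    intro r hr
    rcases Finset.mem_union.1 hr with h | h <;>
      simp only [hS, hT, Finset.mem_filter] at h <;>
      exact Finset.mem_filter.2 ⟨h.1, h.2.trans (by simp)⟩
  have h1 : S.card + T.card ≤
      (R.filter (fun r => r ⊆ X ∪ Y)).card + (R.filter (fun r => r ⊆ X ∩ Y)).card := by
    rw [← hint, ← Finset.card_union_add_card_inter S T]
    exact Nat.add_le_add_right (Finset.card_le_card huni) _
  have h1' : (S.card : ℤ) + T.card ≤
      ((R.filter (fun r => r ⊆ X ∪ Y)).card : ℤ) + (R.filter (fun r => r ⊆ X ∩ Y)).card := by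
    exact_mod_cast h1
  have hcard' : ((X ∪ Y).card : ℤ) + (X ∩ Y).card = X.card + Y.card := by exact_mod_cast hcard
  linarith

/-- If `C ≤ A` then for any `X ⊆ A`, `δ(X) - d(X) ≥ δ(X ∩ C) - d(X ∩ C)`. -/
theorem delta_sub_d_mono {α : Type*} [DecidableEq α]
    (A : Finset α) (R : Finset (Finset α))
    (hR : ∀ r ∈ R, r.Nonempty ∧ r ⊆ A)
    (hpos : ∀ X ⊆ A, 0 ≤ delta R X)
    (d : Finset α → ℤ)
    (hd : ∀ X ⊆ A, IsLeast {z : ℤ | ∃ Y : Finset α, X ⊆ Y ∧ Y ⊆ A ∧ z = delta R Y} (d X))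
    (C : Finset α) (hCA : C ⊆ A)
    (hC : ∀ B : Finset α, C ⊆ B → B ⊆ A → delta R C ≤ delta R B)
    (X : Finset α) (hX : X ⊆ A) :
    delta R (X ∩ C) - d (X ∩ C) ≤ delta R X - d X := by
  -- key: δ(C ∩ B) ≤ δ(B) for B ⊆ A
  have key : ∀ B ⊆ A, delta R (C ∩ B) ≤ delta R B := by
    intro B hB
    have h1 := delta_submod R C B
    have h2 : delta R C ≤ delta R (C ∪ B) :=
      hC (C ∪ B) Finset.subset_union_left (Finset.union_subset hCA hB)
    linarith
  have hXC : X ∩ C ⊆ A := (Finset.inter_subset_left).trans hX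
  obtain ⟨⟨Y, hXCY, hYA, hdY⟩, _⟩ := hd (X ∩ C) hXC
  have hdX : d X ≤ delta R (X ∪ Y) :=
    (hd X hX).2 ⟨X ∪ Y, Finset.subset_union_left, Finset.union_subset hX hYA, rfl⟩
  have hsub := delta_submod R X Y
  have hXYA : X ∩ Y ⊆ A := (Finset.inter_subset_left).trans hX
  have hkey : delta R (X ∩ C) ≤ delta R (X ∩ Y) := by
    have := key (X ∩ Y) hXYA
    have heq : C ∩ (X ∩ Y) = X ∩ C := by
      ext a
      simp only [Finset.mem_inter]
      constructor
      · rintro ⟨h1, h2, _⟩; exact ⟨h2, h1⟩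
      · rintro ⟨h1, h2⟩
        exact ⟨h2, h1, hXCY (Finset.mem_inter.2 ⟨h1, h2⟩)⟩
    rwa [heq] at this
  rw [hdY]
  linarith
end

section
/- Every strict gammoid has weak canonical bases over closed sets: if (A, cl) = PG(A; R) for a finite set system (A; R) with δ ≥ 0, B is a flat, and ā a finite tuple from A, then there is a flat B₀ ⊆ B such that for every flat B₁ ⊆ B, d(ā/B₁) = d(ā/B) if and only if B₀ ⊆ B₁. -/
open Finset

/-!
Let `Y` be the least set minimizing `δ` over `ā ∪ B`, and call a relation crossing if it lies in `Y`
but not in `B`. For a flat `B₁ ⊆ B`, the predimension of `(Y \ B) ∪ B₁` over `B₁` exceeds that of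
`Y` over `B` by the number of crossing relations not contained in it. If `d(ā/B₁) = d(ā/B)`, then
for a minimizer `W` of `ā ∪ B₁` the pair `W, B` is modular, so `W ∩ B = B₁` and `Y ⊆ W ∪ B`; hence
`Y ∩ W = (Y \ B) ∪ B₁` minimizes `ā ∪ B₁` and no crossing relation is lost. Conversely, if none is
lost and `ā ⊆ (Y \ B) ∪ B₁`, this set witnesses `d(ā/B₁) ≤ d(ā/B)`. Both conditions say that `B₁`
contains `N = (ā ∪ ⋃ crossing) ∩ B`, so `B₀` is the closure of `N`.
-/

namespace StrictGammoid

variable {α : Type*} [DecidableEq α]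

def crossing (R : Finset (Finset α)) (Y B : Finset α) : Finset (Finset α) :=
  R.filter (fun r => r ⊆ Y ∧ ¬ r ⊆ B)

theorem delta_union_add_delta_inter_le (R : Finset (Finset α)) (X Y : Finset α) :
    delta R (X ∪ Y) + delta R (X ∩ Y) ≤ delta R X + delta R Y := by
  have hX := card_union_add_card_inter X Y
  have hR := card_union_add_card_inter (R.filter (· ⊆ X)) (R.filter (· ⊆ Y))
  rw [← filter_or, ← filter_and] at hR
  simp_rw [← subset_inter_iff] at hR
  have hle : (R.filter (fun r => r ⊆ X ∨ r ⊆ Y)).card ≤ (R.filter (· ⊆ X ∪ Y)).card :=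
    card_le_card <| monotone_filter_right R fun r _ h =>
      h.elim (·.trans subset_union_left) (·.trans subset_union_right)
  unfold delta
  omega

theorem delta_sub_delta_of_subset (R : Finset (Finset α)) {P V : Finset α} (hPV : P ⊆ V) :
    delta R V - delta R P = (V \ P).card - (crossing R V P).card := by
  have hV := card_sdiff_add_card_eq_card hPV
  have hR := card_filter_add_card_filter_not (s := R.filter (· ⊆ V)) (· ⊆ P)
  rw [filter_filter, filter_filter, filter_congr fun r _ => and_iff_right_of_imp (·.trans hPV)]
    at hR
  unfold delta crossing
  omega

theorem crossing_sdiff_union {R : Finset (Finset α)} {Y B B₁ : Finset α} (hB₁B : B₁ ⊆ B)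
    (hBY : B ⊆ Y) :
    crossing R ((Y \ B) ∪ B₁) B₁ = (crossing R Y B).filter (· ⊆ (Y \ B) ∪ B₁) := by
  ext r
  simp only [crossing, mem_filter]
  constructor
  · rintro ⟨hr, hrY', hrB₁⟩
    refine ⟨⟨hr, hrY'.trans (union_subset sdiff_subset (hB₁B.trans hBY)), fun hrB => hrB₁ ?_⟩, hrY'⟩
    intro x hx
    have := hrY' hx
    simp only [mem_union, mem_sdiff] at this
    exact this.resolve_left fun h => h.2 (hrB hx)
  · rintro ⟨⟨hr, -, hrB⟩, hrY'⟩
    exact ⟨hr, hrY', fun h => hrB (h.trans hB₁B)⟩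

theorem subset_sdiff_union_iff {U Y B B₁ : Finset α} (hUY : U ⊆ Y) :
    U ⊆ (Y \ B) ∪ B₁ ↔ U ∩ B ⊆ B₁ := by
  constructor
  · intro h x hx
    have := h (mem_inter.1 hx).1
    simp only [mem_union, mem_sdiff] at this
    exact this.resolve_left fun h' => h'.2 (mem_inter.1 hx).2
  · intro h x hx
    by_cases hxB : x ∈ B
    · exact mem_union_right _ (h (mem_inter.2 ⟨hx, hxB⟩))
    · exact mem_union_left _ (mem_sdiff.2 ⟨hUY hx, hxB⟩)

theorem delta_sdiff_union_sub_delta (R : Finset (Finset α)) {Y B B₁ : Finset α} (hB₁B : B₁ ⊆ B)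
    (hBY : B ⊆ Y) :
    delta R ((Y \ B) ∪ B₁) - delta R B₁ = delta R Y - delta R B +
      ((crossing R Y B).filter (¬ · ⊆ (Y \ B) ∪ B₁)).card := by
  have hsdiff : ((Y \ B) ∪ B₁) \ B₁ = Y \ B := by
    rw [union_sdiff_right, sdiff_eq_self_of_disjoint]
    exact disjoint_of_subset_right hB₁B sdiff_disjoint
  have hsplit := card_filter_add_card_filter_not (s := crossing R Y B) (· ⊆ (Y \ B) ∪ B₁)
  rw [delta_sub_delta_of_subset R subset_union_right, delta_sub_delta_of_subset R hBY, hsdiff,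
    crossing_sdiff_union hB₁B hBY]
  omega

def IsDeltaRank (A : Finset α) (R : Finset (Finset α)) (d : Finset α → ℤ) : Prop :=
  ∀ X ⊆ A, IsLeast {z : ℤ | ∃ Y : Finset α, X ⊆ Y ∧ Y ⊆ A ∧ z = delta R Y} (d X)

def IsMinimizer (A : Finset α) (R : Finset (Finset α)) (d : Finset α → ℤ) (X Y : Finset α) :
    Prop :=
  X ⊆ Y ∧ Y ⊆ A ∧ delta R Y = d X

namespace IsDeltaRank

variable {A : Finset α} {R : Finset (Finset α)} {d : Finset α → ℤ} {X Y P Q S F : Finset α}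

theorem le_delta (hd : IsDeltaRank A R d) (hXY : X ⊆ Y) (hYA : Y ⊆ A) : d X ≤ delta R Y :=
  (hd X (hXY.trans hYA)).2 ⟨Y, hXY, hYA, rfl⟩

theorem exists_isMinimizer (hd : IsDeltaRank A R d) (hX : X ⊆ A) :
    ∃ Y, IsMinimizer A R d X Y := by
  obtain ⟨Y, hXY, hYA, h⟩ := (hd X hX).1
  exact ⟨Y, hXY, hYA, h.symm⟩

theorem mono (hd : IsDeltaRank A R d) (hXY : X ⊆ Y) (hYA : Y ⊆ A) : d X ≤ d Y := by
  obtain ⟨Z, hYZ, hZA, hZ⟩ := hd.exists_isMinimizer hYA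
  exact hZ ▸ hd.le_delta (hXY.trans hYZ) hZA

theorem delta_union_inter_eq (hd : IsDeltaRank A R d) {W V : Finset α}
    (hW : IsMinimizer A R d P W) (hV : IsMinimizer A R d Q V) (hS : S ⊆ P ∩ Q)
    (h : d P + d Q ≤ d (P ∪ Q) + d S) :
    delta R (W ∪ V) = d (P ∪ Q) ∧ delta R (W ∩ V) = d S := by
  have hunion := hd.le_delta (union_subset_union hW.1 hV.1) (union_subset hW.2.1 hV.2.1)
  have hinter := hd.le_delta (hS.trans (inter_subset_inter hW.1 hV.1))
    (inter_subset_left.trans hW.2.1)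
  have := delta_union_add_delta_inter_le R W V
  constructor <;> linarith [hW.2.2, hV.2.2]

theorem union_add_inter_le (hd : IsDeltaRank A R d) (hP : P ⊆ A) (hQ : Q ⊆ A) :
    d (P ∪ Q) + d (P ∩ Q) ≤ d P + d Q := by
  obtain ⟨W, hW⟩ := hd.exists_isMinimizer hP
  obtain ⟨V, hV⟩ := hd.exists_isMinimizer hQ
  have hunion := hd.le_delta (union_subset_union hW.1 hV.1) (union_subset hW.2.1 hV.2.1)
  have hinter := hd.le_delta (inter_subset_inter hW.1 hV.1) (inter_subset_left.trans hW.2.1)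
  have := delta_union_add_delta_inter_le R W V
  linarith [hW.2.2, hV.2.2]

theorem isMinimizer_union (hd : IsDeltaRank A R d) {W V : Finset α} (hW : IsMinimizer A R d X W)
    (hV : IsMinimizer A R d X V) : IsMinimizer A R d X (W ∪ V) :=
  ⟨hW.1.trans subset_union_left, union_subset hW.2.1 hV.2.1,
    by simpa using (hd.delta_union_inter_eq hW hV (inter_self X).ge (by simp)).1⟩

theorem isMinimizer_inter (hd : IsDeltaRank A R d) {W V : Finset α} (hW : IsMinimizer A R d X W)
    (hV : IsMinimizer A R d X V) : IsMinimizer A R d X (W ∩ V) :=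
  ⟨subset_inter hW.1 hV.1, inter_subset_left.trans hW.2.1,
    (hd.delta_union_inter_eq hW hV (inter_self X).ge (by simp)).2⟩

theorem exists_greatest_isMinimizer (hd : IsDeltaRank A R d) (hX : X ⊆ A) :
    ∃ Z, IsMinimizer A R d X Z ∧ ∀ Y, IsMinimizer A R d X Y → Y ⊆ Z := by
  classical
  set M := A.powerset.filter (IsMinimizer A R d X)
  have hM : ∀ Y, Y ∈ M ↔ IsMinimizer A R d X Y := fun Y =>
    mem_filter.trans (and_iff_right_of_imp fun h => mem_powerset.2 h.2.1)
  obtain ⟨Y, hY⟩ := hd.exists_isMinimizer hX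
  refine ⟨M.sup id, ?_, fun Y hY => le_sup (f := id) ((hM Y).2 hY)⟩
  exact SupClosed.finsetSup_mem (s := {Y | IsMinimizer A R d X Y})
    (fun _ hW _ hV => hd.isMinimizer_union hW hV) ⟨Y, (hM Y).2 hY⟩ fun W hW => (hM W).1 hW

theorem exists_least_isMinimizer (hd : IsDeltaRank A R d) (hX : X ⊆ A) :
    ∃ Z, IsMinimizer A R d X Z ∧ ∀ Y, IsMinimizer A R d X Y → Z ⊆ Y := by
  classical
  set M := A.powerset.filter (IsMinimizer A R d X)
  have hM : ∀ Y, Y ∈ M ↔ IsMinimizer A R d X Y := fun Y =>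
    mem_filter.trans (and_iff_right_of_imp fun h => mem_powerset.2 h.2.1)
  obtain ⟨Y, hY⟩ := hd.exists_isMinimizer hX
  have hne : M.Nonempty := ⟨Y, (hM Y).2 hY⟩
  refine ⟨M.inf' hne id, ?_, fun Y hY => inf'_le (f := id) ((hM Y).2 hY)⟩
  exact InfClosed.finsetInf'_mem (s := {Y | IsMinimizer A R d X Y})
    (fun _ hW _ hV => hd.isMinimizer_inter hW hV) hne fun W hW => (hM W).1 hW

theorem subset_of_isMinimizer (hd : IsDeltaRank A R d) (hF : IsFlat A d F) (hSF : S ⊆ F)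
    {Z : Finset α} (hZ : IsMinimizer A R d S Z) : Z ⊆ F := by
  obtain ⟨W, hW⟩ := hd.exists_isMinimizer hF.1
  have hSF' : S ∪ F = F := union_eq_right.2 hSF
  have hZW := (hd.delta_union_inter_eq hZ hW (subset_inter subset_rfl hSF)
    (by rw [hSF', add_comm])).1
  rw [hSF'] at hZW
  intro z hz
  refine hF.2 z (hZ.2.1 hz) (le_antisymm ?_ (hd.mono (subset_insert z F) ?_))
  · exact hZW ▸ hd.le_delta (insert_subset (mem_union_left W hz) (hW.1.trans subset_union_right))
      (union_subset hZ.2.1 hW.2.1)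
  · exact insert_subset (hZ.2.1 hz) hF.1

theorem isMinimizer_self (hd : IsDeltaRank A R d) (hF : IsFlat A d F) : IsMinimizer A R d F F := by
  obtain ⟨W, hW⟩ := hd.exists_isMinimizer hF.1
  rwa [subset_antisymm (hd.subset_of_isMinimizer hF subset_rfl hW) hW.1] at hW

theorem subset_iff_of_isMinimizer (hd : IsDeltaRank A R d) (hF : IsFlat A d F) {Z : Finset α}
    (hZ : IsMinimizer A R d S Z) : Z ⊆ F ↔ S ⊆ F :=
  ⟨hZ.1.trans, fun hSF => hd.subset_of_isMinimizer hF hSF hZ⟩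

/-- The greatest minimizer of `X` is the closure of `X`. -/
theorem isFlat_of_greatest (hd : IsDeltaRank A R d) {Z : Finset α} (hZ : IsMinimizer A R d X Z)
    (hmax : ∀ Y, IsMinimizer A R d X Y → Y ⊆ Z) : IsFlat A d Z := by
  have hdZ : d Z = d X := le_antisymm (hZ.2.2 ▸ hd.le_delta subset_rfl hZ.2.1) (hd.mono hZ.1 hZ.2.1)
  refine ⟨hZ.2.1, fun y hy hyZ => ?_⟩
  obtain ⟨W, hZW, hWA, hW⟩ := hd.exists_isMinimizer (insert_subset hy hZ.2.1)
  exact hmax W ⟨hZ.1.trans ((subset_insert y Z).trans hZW), hWA, by rw [hW, hyZ, hdZ]⟩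
    (hZW (mem_insert_self y Z))

theorem isMinimizer_sdiff_union (hd : IsDeltaRank A R d) {B B₁ : Finset α} (hB : IsFlat A d B)
    (hB₁ : IsFlat A d B₁) (hB₁B : B₁ ⊆ B) (hX : X ⊆ A) (hY : IsMinimizer A R d (X ∪ B) Y)
    (hY_least : ∀ Z, IsMinimizer A R d (X ∪ B) Z → Y ⊆ Z)
    (heq : d (X ∪ B₁) - d B₁ = d (X ∪ B) - d B) :
    IsMinimizer A R d (X ∪ B₁) ((Y \ B) ∪ B₁) := by
  obtain ⟨W, hW⟩ := hd.exists_isMinimizer (union_subset hX hB₁.1)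
  have hXB₁B : X ∪ B₁ ∪ B = X ∪ B := by rw [union_assoc, union_eq_right.2 hB₁B]
  obtain ⟨hWB, hWB₁⟩ := hd.delta_union_inter_eq hW (hd.isMinimizer_self hB)
    (subset_inter subset_union_right hB₁B) (by rw [hXB₁B]; linarith)
  rw [hXB₁B] at hWB
  have hB₁W : B₁ ⊆ W := subset_union_right.trans hW.1
  have hWB_sub : W ∩ B ⊆ B₁ := hd.subset_of_isMinimizer hB₁ subset_rfl
    ⟨subset_inter hB₁W hB₁B, inter_subset_left.trans hW.2.1, hWB₁⟩
  have hYWB : Y ⊆ W ∪ B := hY_least _ ⟨union_subset_union (subset_union_left.trans hW.1) subset_rfl,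
    union_subset hW.2.1 hB.1, hWB⟩
  have hXB₁ : X ∪ B₁ ⊆ X ∪ B := union_subset_union subset_rfl hB₁B
  have hYW := (hd.delta_union_inter_eq hY hW (subset_inter hXB₁ subset_rfl)
    (by rw [union_eq_left.2 hXB₁])).2
  have hYW_eq : Y ∩ W = (Y \ B) ∪ B₁ := by
    ext x
    have := @hYWB x; have := @hWB_sub x; have := @hB₁W x; have := @hXB₁ x; have := @hY.1 x
    simp only [mem_inter, mem_union, mem_sdiff] at *
    tauto
  exact hYW_eq ▸ ⟨subset_inter (hXB₁.trans hY.1) hW.1, inter_subset_left.trans hY.2.1, hYW⟩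

theorem sub_rank_eq_iff (hd : IsDeltaRank A R d) {B B₁ : Finset α} (hB : IsFlat A d B)
    (hB₁ : IsFlat A d B₁) (hB₁B : B₁ ⊆ B) (hX : X ⊆ A) (hY : IsMinimizer A R d (X ∪ B) Y)
    (hY_least : ∀ Z, IsMinimizer A R d (X ∪ B) Z → Y ⊆ Z) :
    d (X ∪ B₁) - d B₁ = d (X ∪ B) - d B ↔ (X ∪ (crossing R Y B).biUnion id) ∩ B ⊆ B₁ := by
  have hBY : B ⊆ Y := subset_union_right.trans hY.1
  have hcount := delta_sdiff_union_sub_delta R hB₁B hBY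
  rw [(hd.isMinimizer_self hB).2.2, (hd.isMinimizer_self hB₁).2.2, hY.2.2] at hcount
  have hUY : X ∪ (crossing R Y B).biUnion id ⊆ Y :=
    union_subset (subset_union_left.trans hY.1) (biUnion_subset.2 fun r hr => (mem_filter.1 hr).2.1)
  have hbad : (∀ r ∈ crossing R Y B, id r ⊆ (Y \ B) ∪ B₁) ↔
      ((crossing R Y B).filter (¬ · ⊆ (Y \ B) ∪ B₁)).card = 0 := by
    simp only [id, card_eq_zero, filter_eq_empty_iff, not_not]
  rw [← subset_sdiff_union_iff hUY, union_subset_iff, biUnion_subset, hbad]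
  constructor
  · intro heq
    have hY' := hd.isMinimizer_sdiff_union hB hB₁ hB₁B hX hY hY_least heq
    refine ⟨subset_union_left.trans hY'.1, ?_⟩
    rw [hY'.2.2] at hcount
    omega
  · rintro ⟨hXY', hgood⟩
    have hle := hd.le_delta (union_subset hXY' subset_union_right)
      (union_subset (sdiff_subset.trans hY.2.1) hB₁.1)
    have hge := hd.union_add_inter_le (union_subset hX hB₁.1) hB.1
    rw [union_assoc, union_eq_right.2 hB₁B] at hge
    have hB₁_le := hd.mono (Y := (X ∪ B₁) ∩ B) (subset_inter subset_union_right hB₁B)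
      (inter_subset_right.trans hB.1)
    omega

end IsDeltaRank

end StrictGammoid

theorem weak_canonical_bases_general {α : Type*} [DecidableEq α]
    (A : Finset α) (R : Finset (Finset α))
    (d : Finset α → ℤ)
    (hd : ∀ X ⊆ A, IsLeast {z : ℤ | ∃ Y : Finset α, X ⊆ Y ∧ Y ⊆ A ∧ z = delta R Y} (d X))
    (B : Finset α) (hB : IsFlat A d B)
    (a : Finset α) (ha : a ⊆ A) :
    ∃ B₀ : Finset α, IsFlat A d B₀ ∧ B₀ ⊆ B ∧
      ∀ B₁ : Finset α, IsFlat A d B₁ → B₁ ⊆ B →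
        (d (a ∪ B₁) - d B₁ = d (a ∪ B) - d B ↔ B₀ ⊆ B₁) := by
  have hd : StrictGammoid.IsDeltaRank A R d := hd
  obtain ⟨Y, hY, hY_least⟩ := hd.exists_least_isMinimizer (union_subset ha hB.1)
  set N := (a ∪ (StrictGammoid.crossing R Y B).biUnion id) ∩ B
  have hNB : N ⊆ B := inter_subset_right
  obtain ⟨B₀, hB₀, hB₀_greatest⟩ := hd.exists_greatest_isMinimizer (hNB.trans hB.1)
  refine ⟨B₀, hd.isFlat_of_greatest hB₀ hB₀_greatest, hd.subset_of_isMinimizer hB hNB hB₀,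
    fun B₁ hB₁ hB₁B => ?_⟩
  rw [hd.sub_rank_eq_iff hB hB₁ hB₁B ha hY hY_least, hd.subset_iff_of_isMinimizer hB₁ hB₀]

/-- Strict gammoids have weak canonical bases over closed sets: for a flat `B` and a
finite tuple `a`, there is a flat `B₀ ⊆ B` such that for every flat `B₁ ⊆ B`,
`d(a/B₁) = d(a/B)` iff `B₀ ⊆ B₁`. -/
theorem weak_canonical_bases {α : Type*} [DecidableEq α]
    (A : Finset α) (R : Finset (Finset α))
    (hR : ∀ r ∈ R, r.Nonempty ∧ r ⊆ A)
    (hpos : ∀ X ⊆ A, 0 ≤ delta R X)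
    (d : Finset α → ℤ)
    (hd : ∀ X ⊆ A, IsLeast {z : ℤ | ∃ Y : Finset α, X ⊆ Y ∧ Y ⊆ A ∧ z = delta R Y} (d X))
    (B : Finset α) (hB : IsFlat A d B)
    (a : Finset α) (ha : a ⊆ A) :
    ∃ B₀ : Finset α, IsFlat A d B₀ ∧ B₀ ⊆ B ∧
      ∀ B₁ : Finset α, IsFlat A d B₁ → B₁ ⊆ B →
        (d (a ∪ B₁) - d B₁ = d (a ∪ B) - d B ↔ B₀ ⊆ B₁) :=
  weak_canonical_bases_general A R d hd B hB a ha
end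

section
/- Let (A; R) be a finite set system with δ ≥ 0 and C ≤ A self-sufficient. For a flat F of the restricted matroid (C, cl_C), write F̃ = cl(F) for its closure in PG(A; R). Then for flats F₁, F₂ of (C, cl_C): F̃₁ ∩ F̃₂ = (F₁ ∩ F₂)~, i.e., the closure in A of F₁ ∩ F₂ equals cl(F₁) ∩ cl(F₂). -/
open Finset

/-!
Let `y ∈ cl(F₁) ∩ cl(F₂)` and choose `Zᵢ ⊇ Fᵢ ∪ {y}` with `δ(Zᵢ) = d(Fᵢ)`. Since `Fᵢ` is a flat
of `C`, `Zᵢ ∩ C = Fᵢ`. The defect of submodularity of `δ` on a pair `X, Y` is the number of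
relations contained in `X ∪ Y` but in neither `X` nor `Y`; it can only drop when passing from
`(Z₁, Z₂)` to `(Z₁ ∩ C, Z₂ ∩ C)`, and `δ((Z₁ ∪ Z₂) ∩ C) ≤ δ(Z₁ ∪ Z₂)` as `C ≤ A`. Together these give
`δ(Z₁ ∩ Z₂) ≤ δ(F₁ ∩ F₂)`, and `F₁ ∩ F₂` is again a flat of `C`, hence self-sufficient, so
`d((F₁ ∩ F₂) ∪ {y}) ≤ δ(Z₁ ∩ Z₂) ≤ d(F₁ ∩ F₂)`. The reverse inclusion is monotonicity of `cl`.
-/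

namespace PredimensionClosure

variable {α : Type*} [DecidableEq α]

def crossing (R : Finset (Finset α)) (X Y : Finset α) : Finset (Finset α) :=
  R.filter (fun r => r ⊆ X ∪ Y ∧ ¬ r ⊆ X ∧ ¬ r ⊆ Y)

def SelfSufficient (R : Finset (Finset α)) (A C : Finset α) : Prop :=
  ∀ B : Finset α, C ⊆ B → B ⊆ A → delta R C ≤ delta R B

def IsFlatOn (C : Finset α) (d : Finset α → ℤ) (F : Finset α) : Prop :=
  F ⊆ C ∧ ∀ y ∈ C, d (insert y F) = d F → y ∈ F

section Predimension

variable (R : Finset (Finset α))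

lemma card_filter_subset_union_add_card_filter_subset_inter (X Y : Finset α) :
    #(R.filter (· ⊆ X ∪ Y)) + #(R.filter (· ⊆ X ∩ Y))
      = #(R.filter (· ⊆ X)) + #(R.filter (· ⊆ Y)) + #(crossing R X Y) := by
  set S := R.filter (· ⊆ X ∪ Y)
  have h_or : S.filter (fun r => r ⊆ X ∨ r ⊆ Y) = R.filter (· ⊆ X) ∪ R.filter (· ⊆ Y) := by
    ext r
    simp only [S, mem_filter, mem_union]
    constructor
    · rintro ⟨⟨hr, -⟩, h | h⟩ <;> simp [hr, h]
    · rintro (⟨hr, h⟩ | ⟨hr, h⟩)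
      · exact ⟨⟨hr, h.trans subset_union_left⟩, Or.inl h⟩
      · exact ⟨⟨hr, h.trans subset_union_right⟩, Or.inr h⟩
  have h_not_or : S.filter (fun r => ¬ (r ⊆ X ∨ r ⊆ Y)) = crossing R X Y := by
    rw [crossing, filter_filter]
    exact filter_congr fun r _ => by tauto
  have h_and : R.filter (· ⊆ X) ∩ R.filter (· ⊆ Y) = R.filter (· ⊆ X ∩ Y) := by
    simp only [← filter_and, subset_inter_iff]
  rw [← card_filter_add_card_filter_not (fun r => r ⊆ X ∨ r ⊆ Y), h_or, h_not_or, ← h_and]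
  have := card_union_add_card_inter (R.filter (· ⊆ X)) (R.filter (· ⊆ Y))
  omega

lemma delta_union_add_delta_inter_add_card_crossing (X Y : Finset α) :
    delta R (X ∪ Y) + delta R (X ∩ Y) + #(crossing R X Y) = delta R X + delta R Y := by
  have h_rel := card_filter_subset_union_add_card_filter_subset_inter R X Y
  have h_card := card_union_add_card_inter X Y
  simp only [delta]
  zify at h_rel h_card
  linarith

lemma delta_union_add_delta_inter_le (X Y : Finset α) :
    delta R (X ∪ Y) + delta R (X ∩ Y) ≤ delta R X + delta R Y := by
  linarith [delta_union_add_delta_inter_add_card_crossing R X Y,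
    Int.natCast_nonneg #(crossing R X Y)]

lemma crossing_inter_subset (X Y C : Finset α) :
    crossing R (X ∩ C) (Y ∩ C) ⊆ crossing R X Y := by
  intro r hr
  simp only [crossing, mem_filter, subset_inter_iff, not_and] at hr ⊢
  obtain ⟨hrR, hrXY, hrX, hrY⟩ := hr
  have hrC : r ⊆ C := hrXY.trans (union_subset inter_subset_right inter_subset_right)
  exact ⟨hrR, hrXY.trans (union_subset_union inter_subset_left inter_subset_left),
    fun h => hrX h hrC, fun h => hrY h hrC⟩

variable {R} {A C : Finset α}

lemma SelfSufficient.delta_inter_le (hC : SelfSufficient R A C) (hCA : C ⊆ A) {X : Finset α}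
    (hXA : X ⊆ A) : delta R (X ∩ C) ≤ delta R X := by
  linarith [delta_union_add_delta_inter_le R X C,
    hC (X ∪ C) subset_union_right (union_subset hXA hCA)]

lemma SelfSufficient.delta_inter_add_le (hC : SelfSufficient R A C) (hCA : C ⊆ A)
    {X Y : Finset α} (hXA : X ⊆ A) (hYA : Y ⊆ A) :
    delta R (X ∩ Y) + delta R (X ∩ C) + delta R (Y ∩ C)
      ≤ delta R X + delta R Y + delta R ((X ∩ C) ∩ (Y ∩ C)) := by
  have h_union : delta R ((X ∩ C) ∪ (Y ∩ C)) ≤ delta R (X ∪ Y) := by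
    rw [← union_inter_distrib_right]
    exact hC.delta_inter_le hCA (union_subset hXA hYA)
  have h_crossing : (#(crossing R (X ∩ C) (Y ∩ C)) : ℤ) ≤ #(crossing R X Y) := by
    exact_mod_cast card_le_card (crossing_inter_subset R X Y C)
  linarith [delta_union_add_delta_inter_add_card_crossing R X Y,
    delta_union_add_delta_inter_add_card_crossing R (X ∩ C) (Y ∩ C)]

end Predimension

section Dimension

variable {R : Finset (Finset α)} {A : Finset α} {d : Finset α → ℤ}
  (hd : ∀ X ⊆ A, IsLeast {z : ℤ | ∃ Y : Finset α, X ⊆ Y ∧ Y ⊆ A ∧ z = delta R Y} (d X))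
include hd

lemma dim_le_delta {X Y : Finset α} (hXY : X ⊆ Y) (hYA : Y ⊆ A) : d X ≤ delta R Y :=
  (hd X (hXY.trans hYA)).2 ⟨Y, hXY, hYA, rfl⟩

lemma exists_delta_eq_dim {X : Finset α} (hXA : X ⊆ A) :
    ∃ Y, X ⊆ Y ∧ Y ⊆ A ∧ delta R Y = d X := by
  obtain ⟨Y, hXY, hYA, h⟩ := (hd X hXA).1
  exact ⟨Y, hXY, hYA, h.symm⟩

lemma dim_mono {X Y : Finset α} (hXY : X ⊆ Y) (hYA : Y ⊆ A) : d X ≤ d Y := by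
  obtain ⟨Z, hYZ, hZA, hZ⟩ := exists_delta_eq_dim hd hYA
  exact hZ ▸ dim_le_delta hd (hXY.trans hYZ) hZA

lemma dim_union_add_dim_inter_le {X Y : Finset α} (hXA : X ⊆ A) (hYA : Y ⊆ A) :
    d (X ∪ Y) + d (X ∩ Y) ≤ d X + d Y := by
  obtain ⟨X', hXX', hX'A, hX'⟩ := exists_delta_eq_dim hd hXA
  obtain ⟨Y', hYY', hY'A, hY'⟩ := exists_delta_eq_dim hd hYA
  linarith [dim_le_delta hd (union_subset_union hXX' hYY') (union_subset hX'A hY'A),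
    dim_le_delta hd (inter_subset_inter hXX' hYY') (inter_subset_left.trans hX'A),
    delta_union_add_delta_inter_le R X' Y']

lemma clFn_mono {X Y : Finset α} (hXY : X ⊆ Y) (hYA : Y ⊆ A) : clFn A d X ⊆ clFn A d Y := by
  intro y hy
  simp only [clFn, mem_filter] at hy ⊢
  obtain ⟨hyA, hy⟩ := hy
  refine ⟨hyA, le_antisymm ?_ (dim_mono hd (subset_insert y Y) (insert_subset hyA hYA))⟩
  have h_sub := dim_union_add_dim_inter_le hd (insert_subset hyA (hXY.trans hYA)) hYA
  rw [insert_union, union_eq_right.2 hXY] at h_sub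
  linarith [dim_mono hd (subset_inter (subset_insert y X) hXY) (inter_subset_right.trans hYA)]

variable {C : Finset α} (hCA : C ⊆ A)
include hCA

lemma IsFlatOn.inter_eq_of_delta_le {F Z : Finset α} (hF : IsFlatOn C d F) (hFZ : F ⊆ Z)
    (hZA : Z ⊆ A) (hZ : delta R Z ≤ d F) : Z ∩ C = F := by
  refine subset_antisymm (fun z hz => ?_) (subset_inter hFZ hF.1)
  obtain ⟨hzZ, hzC⟩ := mem_inter.1 hz
  refine hF.2 z hzC (le_antisymm ?_ ?_)
  · exact (dim_le_delta hd (insert_subset hzZ hFZ) hZA).trans hZ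
  · exact dim_mono hd (subset_insert z F) (insert_subset (hZA hzZ) (hF.1.trans hCA))

lemma IsFlatOn.delta_eq_dim {F : Finset α} (hC : SelfSufficient R A C) (hF : IsFlatOn C d F) :
    delta R F = d F := by
  obtain ⟨Z, hFZ, hZA, hZ⟩ := exists_delta_eq_dim hd (hF.1.trans hCA)
  have hZC : Z ∩ C = F := hF.inter_eq_of_delta_le hd hCA hFZ hZA hZ.le
  have h_le : delta R F ≤ delta R Z := hZC ▸ hC.delta_inter_le hCA hZA
  linarith [dim_le_delta hd (subset_refl F) (hF.1.trans hCA)]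

lemma IsFlatOn.inter {F₁ F₂ : Finset α} (hF₁ : IsFlatOn C d F₁) (hF₂ : IsFlatOn C d F₂) :
    IsFlatOn C d (F₁ ∩ F₂) := by
  refine ⟨inter_subset_left.trans hF₁.1, fun y hyC hy => ?_⟩
  have hy_cl : y ∈ clFn A d (F₁ ∩ F₂) := mem_filter.2 ⟨hCA hyC, hy⟩
  have hy₁ := clFn_mono hd inter_subset_left (hF₁.1.trans hCA) hy_cl
  have hy₂ := clFn_mono hd inter_subset_right (hF₂.1.trans hCA) hy_cl
  exact mem_inter.2 ⟨hF₁.2 y hyC (mem_filter.1 hy₁).2, hF₂.2 y hyC (mem_filter.1 hy₂).2⟩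

lemma inter_clFn_subset_clFn_inter {F₁ F₂ : Finset α} (hC : SelfSufficient R A C)
    (hF₁ : IsFlatOn C d F₁) (hF₂ : IsFlatOn C d F₂) :
    clFn A d F₁ ∩ clFn A d F₂ ⊆ clFn A d (F₁ ∩ F₂) := by
  intro y hy
  simp only [clFn, mem_inter, mem_filter] at hy ⊢
  obtain ⟨⟨hyA, hy₁⟩, -, hy₂⟩ := hy
  have hF₁A := hF₁.1.trans hCA
  have hF₂A := hF₂.1.trans hCA
  obtain ⟨Z₁, hZ₁, hZ₁A, hδZ₁⟩ := exists_delta_eq_dim hd (insert_subset hyA hF₁A)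
  obtain ⟨Z₂, hZ₂, hZ₂A, hδZ₂⟩ := exists_delta_eq_dim hd (insert_subset hyA hF₂A)
  rw [hy₁] at hδZ₁
  rw [hy₂] at hδZ₂
  have hZ₁C := hF₁.inter_eq_of_delta_le hd hCA ((subset_insert y F₁).trans hZ₁) hZ₁A hδZ₁.le
  have hZ₂C := hF₂.inter_eq_of_delta_le hd hCA ((subset_insert y F₂).trans hZ₂) hZ₂A hδZ₂.le
  have h_key := hC.delta_inter_add_le hCA hZ₁A hZ₂A
  rw [hZ₁C, hZ₂C, hδZ₁, hδZ₂, hF₁.delta_eq_dim hd hCA hC, hF₂.delta_eq_dim hd hCA hC,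
    (hF₁.inter hd hCA hF₂).delta_eq_dim hd hCA hC] at h_key
  have h_insert : insert y (F₁ ∩ F₂) ⊆ Z₁ ∩ Z₂ := by
    rw [insert_inter_distrib]
    exact inter_subset_inter hZ₁ hZ₂
  refine ⟨hyA, le_antisymm ?_ ?_⟩
  · linarith [dim_le_delta hd h_insert (inter_subset_left.trans hZ₁A)]
  · exact dim_mono hd (subset_insert _ _) (insert_subset hyA (inter_subset_left.trans hF₁A))

end Dimension

end PredimensionClosure

open PredimensionClosure

theorem closure_inter_of_selfSufficient_general {α : Type*} [DecidableEq α]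
    (A : Finset α) (R : Finset (Finset α))
    (d : Finset α → ℤ)
    (hd : ∀ X ⊆ A, IsLeast {z : ℤ | ∃ Y : Finset α, X ⊆ Y ∧ Y ⊆ A ∧ z = delta R Y} (d X))
    (C : Finset α) (hCA : C ⊆ A)
    (hC : ∀ B : Finset α, C ⊆ B → B ⊆ A → delta R C ≤ delta R B)
    (F₁ F₂ : Finset α)
    (hF₁ : F₁ ⊆ C ∧ ∀ y ∈ C, d (insert y F₁) = d F₁ → y ∈ F₁)
    (hF₂ : F₂ ⊆ C ∧ ∀ y ∈ C, d (insert y F₂) = d F₂ → y ∈ F₂) :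
    clFn A d F₁ ∩ clFn A d F₂ = clFn A d (F₁ ∩ F₂) := by
  refine subset_antisymm (inter_clFn_subset_clFn_inter hd hCA hC hF₁ hF₂) ?_
  exact subset_inter (clFn_mono hd inter_subset_left (hF₁.1.trans hCA))
    (clFn_mono hd inter_subset_right (hF₂.1.trans hCA))

/-- If `C ≤ A` and `F₁`, `F₂` are flats of the restriction to `C`, then
`cl(F₁) ∩ cl(F₂) = cl(F₁ ∩ F₂)` in `PG(A; R)`. -/
theorem closure_inter_of_selfSufficient {α : Type*} [DecidableEq α]
    (A : Finset α) (R : Finset (Finset α))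
    (hR : ∀ r ∈ R, r.Nonempty ∧ r ⊆ A)
    (hpos : ∀ X ⊆ A, 0 ≤ delta R X)
    (d : Finset α → ℤ)
    (hd : ∀ X ⊆ A, IsLeast {z : ℤ | ∃ Y : Finset α, X ⊆ Y ∧ Y ⊆ A ∧ z = delta R Y} (d X))
    (C : Finset α) (hCA : C ⊆ A)
    (hC : ∀ B : Finset α, C ⊆ B → B ⊆ A → delta R C ≤ delta R B)
    (F₁ F₂ : Finset α)
    (hF₁ : F₁ ⊆ C ∧ ∀ y ∈ C, d (insert y F₁) = d F₁ → y ∈ F₁)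
    (hF₂ : F₂ ⊆ C ∧ ∀ y ∈ C, d (insert y F₂) = d F₂ → y ∈ F₂) :
    clFn A d F₁ ∩ clFn A d F₂ = clFn A d (F₁ ∩ F₂) :=
  closure_inter_of_selfSufficient_general A R d hd C hCA hC F₁ F₂ hF₁ hF₂
end
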